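/- arXiv:2504.03535 — 2 statements merged into one kernel-verified Lean document; each statement's English description precedes it below -/
import Mathlib

section
/- Let T ∈ Aut(X,[μ]) be ergodic and let U ∈ [T]_com be such that T and U have the same orbits almost everywhere (i.e. {Uⁿ(x) : n ∈ ℤ} = {Tⁿ(x) : n ∈ ℤ} for a.e. x). Then T and U are flip-conjugate by an element of the full group [T]: there exists S ∈ [T] with S T S⁻¹ = U or S T⁻¹ S⁻¹ = U. -/
/- # Preliminaries: the group `Aut(X,[μ])` of measure-class preserving transformations
   modulo a.e. equality, full groups, and the commensurating full group. -/

open MeasureTheory Filter Set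

namespace CfgPaper

variable {X : Type*} [MeasurableSpace X]

/-- The group of bimeasurable bijections of `X` (composition as multiplication). -/
instance : Group (X ≃ᵐ X) where
  mul a b := b.trans a
  one := MeasurableEquiv.refl X
  inv := MeasurableEquiv.symm
  mul_assoc a b c := rfl
  one_mul a := rfl
  mul_one a := rfl
  inv_mul_cancel a := by ext x; exact a.symm_apply_apply x

/-- The subgroup of bimeasurable bijections preserving the measure class of `μ`
(pointwise representatives, not yet identified a.e.). -/
def MCP (μ : Measure X) : Subgroup (X ≃ᵐ X) where
  carrier := {T | μ.map T ≪ μ ∧ μ ≪ μ.map T}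
  one_mem' := by
    simp only [Set.mem_setOf_eq]
    rw [show ⇑(1 : X ≃ᵐ X) = id from rfl, Measure.map_id]
    exact ⟨Measure.AbsolutelyContinuous.rfl, Measure.AbsolutelyContinuous.rfl⟩
  mul_mem' := by
    rintro a b ⟨ha1, ha2⟩ ⟨hb1, hb2⟩
    have hmap : μ.map (a * b) = (μ.map b).map a := by
      rw [show ⇑(a * b) = ⇑a ∘ ⇑b from rfl, ← Measure.map_map a.measurable b.measurable]
    constructor
    · rw [hmap]
      exact (hb1.map a.measurable).trans ha1
    · rw [hmap]
      exact ha2.trans (hb2.map a.measurable)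
  inv_mem' := by
    rintro a ⟨ha1, ha2⟩
    have hid : μ.map (⇑a.symm ∘ ⇑a) = μ := by
      rw [MeasurableEquiv.symm_comp_self, Measure.map_id]
    have hmap : (μ.map a).map a.symm = μ := by
      rw [Measure.map_map a.symm.measurable a.measurable, hid]
    constructor
    · calc μ.map ⇑a⁻¹ = μ.map a.symm := rfl
        _ ≪ (μ.map a).map a.symm := ha2.map a.symm.measurable
        _ = μ := hmap
    · calc μ = (μ.map a).map a.symm := hmap.symm
        _ ≪ μ.map a.symm := ha1.map a.symm.measurable
        _ = μ.map ⇑a⁻¹ := rfl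

variable (μ : Measure X)

lemma MCP.qmp (T : MCP μ) : Measure.QuasiMeasurePreserving (⇑(T : X ≃ᵐ X)) μ μ :=
  ⟨(T : X ≃ᵐ X).measurable, T.2.1⟩

/-- The normal subgroup of transformations a.e. equal to the identity. -/
def AeId : Subgroup (MCP μ) where
  carrier := {T | ∀ᵐ x ∂μ, ((T : X ≃ᵐ X)) x = x}
  one_mem' := by
    show ∀ᵐ x ∂μ, ((1 : X ≃ᵐ X)) x = x
    exact Filter.Eventually.of_forall fun x => rfl
  mul_mem' := by
    rintro a b ha hb
    have hnull : μ {y | ((a : X ≃ᵐ X)) y ≠ y} = 0 := by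
      rw [← MeasureTheory.ae_iff]; exact ha
    have h1 : μ ((⇑(b : X ≃ᵐ X)) ⁻¹' {y | ((a : X ≃ᵐ X)) y ≠ y}) = 0 :=
      (MCP.qmp μ b).preimage_null hnull
    have h2 : μ {x | ((b : X ≃ᵐ X)) x ≠ x} = 0 := by
      rw [← MeasureTheory.ae_iff]; exact hb
    have hsub : {x | ((((a * b : MCP μ) : X ≃ᵐ X))) x ≠ x} ⊆
        ((⇑(b : X ≃ᵐ X)) ⁻¹' {y | ((a : X ≃ᵐ X)) y ≠ y}) ∪ {x | ((b : X ≃ᵐ X)) x ≠ x} := by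
      intro x hx
      by_contra hc
      simp only [Set.mem_union, Set.mem_preimage, Set.mem_setOf_eq, not_or, not_not] at hc
      obtain ⟨h₁, h₂⟩ := hc
      exact hx (by
        show ((a : X ≃ᵐ X)) (((b : X ≃ᵐ X)) x) = x
        exact h₁.trans h₂)
    show ∀ᵐ x ∂μ, (((a * b : MCP μ) : X ≃ᵐ X)) x = x
    rw [MeasureTheory.ae_iff]
    exact measure_mono_null hsub (by
      exact le_antisymm ((measure_union_le _ _).trans (by rw [h1, h2]; simp)) (zero_le))
  inv_mem' := by
    rintro a ha
    have hnull : μ {y | ((a : X ≃ᵐ X)) y ≠ y} = 0 := by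
      rw [← MeasureTheory.ae_iff]; exact ha
    have h1 : μ ((⇑((a⁻¹ : MCP μ) : X ≃ᵐ X)) ⁻¹' {y | ((a : X ≃ᵐ X)) y ≠ y}) = 0 :=
      (MCP.qmp μ a⁻¹).preimage_null hnull
    show ∀ᵐ x ∂μ, (((a⁻¹ : MCP μ) : X ≃ᵐ X)) x = x
    rw [MeasureTheory.ae_iff]
    refine measure_mono_null ?_ h1
    intro x hx
    rw [Set.mem_preimage, Set.mem_setOf_eq]
    intro hc
    apply hx
    show ((a⁻¹ : MCP μ) : X ≃ᵐ X) x = x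
    have : ((a : X ≃ᵐ X)) (((a⁻¹ : MCP μ) : X ≃ᵐ X) x) = x := by
      show ((a : X ≃ᵐ X)) (((a : X ≃ᵐ X)).symm x) = x
      exact (a : X ≃ᵐ X).apply_symm_apply x
    rw [hc] at this
    exact this

instance : (AeId μ).Normal := by
  constructor
  intro n hn g
  have hnull : μ {y | ((n : X ≃ᵐ X)) y ≠ y} = 0 := by
    rw [← MeasureTheory.ae_iff]; exact hn
  have h1 : μ ((⇑((g⁻¹ : MCP μ) : X ≃ᵐ X)) ⁻¹' {y | ((n : X ≃ᵐ X)) y ≠ y}) = 0 :=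
    (MCP.qmp μ g⁻¹).preimage_null hnull
  show ∀ᵐ x ∂μ, (((g * n * g⁻¹ : MCP μ) : X ≃ᵐ X)) x = x
  rw [MeasureTheory.ae_iff]
  refine measure_mono_null ?_ h1
  intro x hx
  rw [Set.mem_preimage, Set.mem_setOf_eq]
  intro hc
  apply hx
  show ((g : X ≃ᵐ X)) (((n : X ≃ᵐ X)) (((g⁻¹ : MCP μ) : X ≃ᵐ X) x)) = x
  rw [hc]
  show ((g : X ≃ᵐ X)) (((g : X ≃ᵐ X)).symm x) = x
  exact (g : X ≃ᵐ X).apply_symm_apply x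

/-- `Aut(X,[μ])`: measure-class preserving transformations modulo a.e. equality. -/
def AutMod := MCP μ ⧸ AeId μ

noncomputable instance : Group (AutMod μ) :=
  QuotientGroup.Quotient.group (AeId μ)

/-- The class of a representative in `Aut(X,[μ])`. -/
def toMod (T : MCP μ) : AutMod μ := QuotientGroup.mk T

/- ## Dynamical notions (on representatives) -/

/-- The (two-sided) orbit of `x` under `T`. -/
def orbitZ (T : X ≃ᵐ X) (x : X) : Set X := {y | ∃ n : ℤ, (T ^ n) x = y}

/-- `S` belongs to the full group of `T` (a.e. representative version): a.e. every point is
moved by `S` to a point of its `T`-orbit. -/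
def InFull (T S : X ≃ᵐ X) : Prop := ∀ᵐ x ∂μ, ∃ n : ℤ, S x = (T ^ n) x

/-- `ℕ` viewed inside `ℤ`. -/
def NN : Set ℤ := {n : ℤ | 0 ≤ n}

/-- The image of a set `M ⊆ ℤ` of `T`-exponents at `x` under the permutation of the
`T`-orbit of `x` induced by `S`: the set of `m` such that `T^m x ∈ S (T^M x)`. -/
def permImage (T S : X ≃ᵐ X) (x : X) (M : Set ℤ) : Set ℤ :=
  {m : ℤ | ∃ n ∈ M, S ((T ^ n) x) = (T ^ m) x}

/-- The image of `ℕ` under the permutation of the `T`-orbit of `x` induced by `S`. -/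
def fwdSet (T S : X ≃ᵐ X) (x : X) : Set ℤ := permImage T S x NN

/-- `S` lies in the commensurating full group of `T` (representative version):
`S ∈ [T]` and for a.e. `x` the permutation of the `T`-orbit induced by `S` commensurates `ℕ`. -/
def IsCommRep (T S : X ≃ᵐ X) : Prop :=
  InFull μ T S ∧ ∀ᵐ x ∂μ, (symmDiff (fwdSet T S x) NN).Finite

/-- The pointwise index of `S` at `x`: `|ℕ ∖ σ(ℕ)| - |σ(ℕ) ∖ ℕ|` for the induced permutation. -/
noncomputable def ptIndex (T S : X ≃ᵐ X) (x : X) : ℤ :=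
  ((NN \ fwdSet T S x).ncard : ℤ) - ((fwdSet T S x \ NN).ncard : ℤ)

/- ## Quotient-level notions -/

/-- The full group `[𝕋] ⊆ Aut(X,[μ])`. -/
def FullSet (𝕋 : AutMod μ) : Set (AutMod μ) :=
  {𝕊 | ∃ T S : MCP μ, toMod μ T = 𝕋 ∧ toMod μ S = 𝕊 ∧ InFull μ (T : X ≃ᵐ X) (S : X ≃ᵐ X)}

/-- The commensurating full group `[𝕋]_com ⊆ Aut(X,[μ])` (as a set). -/
def CommFullSet (𝕋 : AutMod μ) : Set (AutMod μ) :=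
  {𝕊 | ∃ T S : MCP μ, toMod μ T = 𝕋 ∧ toMod μ S = 𝕊 ∧ IsCommRep μ (T : X ≃ᵐ X) (S : X ≃ᵐ X)}

/-- `𝕊` is periodic: a.e. orbit is finite. -/
def PeriodicMod (𝕊 : AutMod μ) : Prop :=
  ∃ S : MCP μ, toMod μ S = 𝕊 ∧ ∀ᵐ x ∂μ, (orbitZ (S : X ≃ᵐ X) x).Finite

/-- `𝕋` is aperiodic: a.e. orbit is infinite. -/
def AperiodicMod (𝕋 : AutMod μ) : Prop :=
  ∃ T : MCP μ, toMod μ T = 𝕋 ∧ ∀ᵐ x ∂μ, (orbitZ (T : X ≃ᵐ X) x).Infinite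

/-- `𝕋` is ergodic: every invariant Borel set is null or conull. -/
def ErgodicMod (𝕋 : AutMod μ) : Prop :=
  ∃ T : MCP μ, toMod μ T = 𝕋 ∧ PreErgodic (⇑(T : X ≃ᵐ X)) μ

/-- The index map of `[𝕋]_com` takes the value `k` at `𝕊`. -/
def HasIndexMod (𝕋 𝕊 : AutMod μ) (k : ℤ) : Prop :=
  ∃ T S : MCP μ, toMod μ T = 𝕋 ∧ toMod μ S = 𝕊 ∧
    ∀ᵐ x ∂μ, ptIndex (T : X ≃ᵐ X) (S : X ≃ᵐ X) x = k

/- ## The Polish topology on `[𝕋]_com` (convergence in measure of induced permutations) -/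

/-- An encoding of the countable set `Comm(ℕ)` of subsets of `ℤ` commensurated to `ℕ`. -/
noncomputable def encComm (M : {A : Set ℤ // (symmDiff A NN).Finite}) : ℕ :=
  Encodable.encode M.2.toFinset

/-- A compatible distance between representatives: a weighted sum, over the subsets `M`
commensurated to `ℕ`, of the measure of the set of points where the permutations induced
by `S₁` and `S₂` (or their inverses) on the `T`-orbit disagree on `M`. This metrizes the
topology of convergence in measure in `L⁰(X, Sym(ℤ,ℕ))` of the induced permutations. -/
noncomputable def repDist (T S₁ S₂ : X ≃ᵐ X) : ℝ :=
  ∑' M : {A : Set ℤ // (symmDiff A NN).Finite},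
    (1 / 2 : ℝ) ^ (encComm M + 1) *
      ((μ {x | permImage T S₁ x M.1 ≠ permImage T S₂ x M.1}).toReal +
        (μ {x | permImage T S₁.symm x M.1 ≠ permImage T S₂.symm x M.1}).toReal)

/-- The induced distance on `Aut(X,[μ])` (independent of the chosen representatives). -/
noncomputable def qDist (𝕋 𝕊₁ 𝕊₂ : AutMod μ) : ℝ :=
  ⨅ (T : MCP μ) (_ : toMod μ T = 𝕋) (S₁ : MCP μ) (_ : toMod μ S₁ = 𝕊₁)
    (S₂ : MCP μ) (_ : toMod μ S₂ = 𝕊₂), repDist μ (T : X ≃ᵐ X) (S₁ : X ≃ᵐ X) (S₂ : X ≃ᵐ X)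

/-- The Polish topology of `[𝕋]_com`, generated by the balls of the distance above. -/
noncomputable def cfgTop (𝕋 : AutMod μ) :
    TopologicalSpace {𝕊 : AutMod μ // 𝕊 ∈ CommFullSet μ 𝕋} :=
  TopologicalSpace.generateFrom
    {U | ∃ (S₀ : {𝕊 : AutMod μ // 𝕊 ∈ CommFullSet μ 𝕋}) (ε : ℝ), 0 < ε ∧
      U = {S | qDist μ 𝕋 S₀.1 S.1 < ε}}

/-- The derived subgroup of `[𝕋]_com` (generated by commutators of its elements). -/
noncomputable def derivedCfg (𝕋 : AutMod μ) : Subgroup (AutMod μ) :=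
  Subgroup.closure
    {g | ∃ a ∈ CommFullSet μ 𝕋, ∃ b ∈ CommFullSet μ 𝕋, g = a * b * a⁻¹ * b⁻¹}

/-- The topological derived subgroup `D([𝕋]_com)‾`: the closure, in `[𝕋]_com`,
of the derived subgroup. -/
noncomputable def DbarSet (𝕋 : AutMod μ) : Set {𝕊 : AutMod μ // 𝕊 ∈ CommFullSet μ 𝕋} :=
  @closure _ (cfgTop μ 𝕋) {S | S.1 ∈ derivedCfg μ 𝕋}


/- ## Auxiliary development for the proof -/

section Aux

variable {X : Type*} [MeasurableSpace X]

lemma mulApply (a b : X ≃ᵐ X) (x : X) : (a * b) x = a (b x) := rfl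

@[simp] lemma oneApply (x : X) : (1 : X ≃ᵐ X) x = x := rfl

lemma invApply (a : X ≃ᵐ X) (x : X) : (a⁻¹ : X ≃ᵐ X) x = a.symm x := rfl

lemma zpowAddApply (T : X ≃ᵐ X) (a b : ℤ) (x : X) :
    (T ^ (a + b)) x = (T ^ a) ((T ^ b) x) := by
  rw [zpow_add]; rfl

lemma zpow_fix_self (U : X ≃ᵐ X) (x : X) {p : ℤ} (h : (U ^ p) x = x) :
    (U ^ (-p)) x = x := by
  have : (U ^ (-p)) ((U ^ p) x) = x := by
    rw [← zpowAddApply]; simp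
  rwa [h] at this

lemma zpow_fix_mul (U : X ≃ᵐ X) (x : X) {p : ℤ} (h : (U ^ p) x = x) :
    ∀ k : ℤ, (U ^ (p * k)) x = x := by
  intro k
  induction k using Int.induction_on with
  | zero => simp
  | succ k ih =>
      have : p * (k + 1) = p * k + p := by ring
      rw [this, zpowAddApply, h, ih]
  | pred k ih =>
      have : p * (-k - 1) = p * (-k) + (-p) := by ring
      rw [this, zpowAddApply, zpow_fix_self U x h, ih]

/-- A "good point" for the pair `(T, U)` : the `T`-orbit is free and coincides
with the `U`-orbit. -/
def GoodPt (T U : X ≃ᵐ X) (x : X) : Prop :=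
  (∀ j : ℤ, j ≠ 0 → (T ^ j) x ≠ x) ∧ (∀ n : ℤ, ∃ j : ℤ, (U ^ n) x = (T ^ j) x) ∧
    (∀ j : ℤ, ∃ n : ℤ, (U ^ n) x = (T ^ j) x)

namespace GoodPt

variable {T U : X ≃ᵐ X} {x : X}

lemma uniqT (hg : GoodPt T U x) {j k : ℤ} (h : (T ^ j) x = (T ^ k) x) : j = k := by
  by_contra hjk
  apply hg.1 (j - k) (by omega)
  have : (T ^ (j - k)) x = (T ^ (-k)) ((T ^ j) x) := by
    rw [← zpowAddApply]; ring_nf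
  rw [this, h, ← zpowAddApply]
  simp

end GoodPt

open Classical in
/-- The position function: `(U ^ n) x = (T ^ (theta T U x n)) x`. -/
noncomputable def theta (T U : X ≃ᵐ X) (x : X) (n : ℤ) : ℤ :=
  if h : ∃ j : ℤ, (U ^ n) x = (T ^ j) x then h.choose else 0

namespace GoodPt

variable {T U : X ≃ᵐ X} {x : X}

lemma theta_spec (hg : GoodPt T U x) (n : ℤ) :
    (U ^ n) x = (T ^ (theta T U x n)) x := by
  have h := hg.2.1 n
  rw [theta, dif_pos h]
  exact h.choose_spec

lemma theta_eq_iff (hg : GoodPt T U x) {n j : ℤ} :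
    theta T U x n = j ↔ (U ^ n) x = (T ^ j) x := by
  constructor
  · rintro rfl; exact hg.theta_spec n
  · intro h
    exact hg.uniqT (((hg.theta_spec n).symm.trans h))

lemma theta_zero (hg : GoodPt T U x) : theta T U x 0 = 0 := by
  rw [hg.theta_eq_iff]; simp

lemma theta_surj (hg : GoodPt T U x) (j : ℤ) : ∃ n, theta T U x n = j := by
  obtain ⟨n, hn⟩ := hg.2.2 j
  exact ⟨n, (hg.theta_eq_iff).2 hn⟩

lemma upow_eq (hg : GoodPt T U x) {n m : ℤ} (h : (U ^ n) x = (U ^ m) x) : n = m := by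
  by_contra hnm
  -- the point is `U`-periodic with period `(n - m)`, contradicting infinite free `T`-orbit
  have hfix : (U ^ (n - m)) x = x := by
    have : (U ^ (n - m)) x = (U ^ (-m)) ((U ^ n) x) := by
      rw [← zpowAddApply]; ring_nf
    rw [this, h, ← zpowAddApply]; simp
  set q : ℤ := |n - m| with hq
  have hq0 : 0 < q := abs_pos.2 (by omega)
  have hfixq : (U ^ q) x = x := by
    rcases abs_choice (n - m) with h1 | h1
    · rwa [hq, h1]
    · rw [hq, h1]; exact zpow_fix_self U x hfix
  -- every theta value is attained on `Ico 0 q`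
  have hall : ∀ j : ℤ, j ∈ theta T U x '' (Set.Ico 0 q) := by
    intro j
    obtain ⟨n', hn'⟩ := hg.theta_surj j
    refine ⟨n' % q, ⟨Int.emod_nonneg n' (by omega), Int.emod_lt_of_pos n' hq0⟩, ?_⟩
    rw [hg.theta_eq_iff]
    have hdecomp : n' = q * (n' / q) + n' % q := (Int.mul_ediv_add_emod n' q).symm
    have : (U ^ n') x = (U ^ (n' % q)) ((U ^ (q * (n' / q))) x) := by
      rw [← zpowAddApply, add_comm, ← hdecomp]
    rw [zpow_fix_mul U x hfixq] at this
    rw [← this, ← hg.theta_eq_iff (n := n'), hn']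
  have : (Set.univ : Set ℤ).Finite := by
    apply Set.Finite.subset ((Set.finite_Ico (0:ℤ) q).image (theta T U x))
    intro j _
    exact hall j
  exact Set.infinite_univ this

lemma theta_inj (hg : GoodPt T U x) {n m : ℤ} (h : theta T U x n = theta T U x m) :
    n = m := by
  apply hg.upow_eq
  rw [hg.theta_spec n, hg.theta_spec m, h]

end GoodPt

end Aux

section PsetDef

variable {X : Type*} [MeasurableSpace X]

/-- The set of `U`-times sent to the negative part of the `T`-orbit. -/
def Pset (T U : X ≃ᵐ X) (x : X) : Set ℤ :=
  {n : ℤ | ∃ j : ℤ, j < 0 ∧ (U ^ n) x = (T ^ j) x}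

/-- The balanced index of a subset of `ℤ` against `ℤ₋ = NNᶜ`. -/
noncomputable def mval (A : Set ℤ) : ℤ :=
  ((A ∩ NN).ncard : ℤ) - ((NNᶜ \ A).ncard : ℤ)

/-- The index used to define the conjugating element. -/
noncomputable def mInt (T U : X ≃ᵐ X) (x : X) : ℤ := mval (Pset T U x)

end PsetDef

section MvalLemmas

lemma mem_NN {n : ℤ} : n ∈ NN ↔ 0 ≤ n := Iff.rfl

lemma mem_NNc {n : ℤ} : n ∈ NNᶜ ↔ n < 0 := by
  simp [NN, Set.mem_compl_iff]

lemma finite_inter_NN {A : Set ℤ} (h : (symmDiff A NNᶜ).Finite) : (A ∩ NN).Finite := by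
  refine h.subset fun n hn => ?_
  rw [Set.mem_symmDiff]
  exact Or.inl ⟨hn.1, by simpa [mem_NNc] using hn.2⟩

lemma finite_diff_NN {A : Set ℤ} (h : (symmDiff A NNᶜ).Finite) : (NNᶜ \ A).Finite := by
  refine h.subset fun n hn => ?_
  rw [Set.mem_symmDiff]
  exact Or.inr ⟨hn.1, hn.2⟩

lemma abs_bounds (t : ℤ) : t ≤ |t| ∧ -|t| ≤ t ∧ -t ≤ |t| ∧ -|t| ≤ -t :=
  ⟨le_abs_self t, neg_abs_le t, neg_le_abs t, by simpa using neg_le_neg (le_abs_self t)⟩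

lemma shiftFin {A : Set ℤ} (t : ℤ) (h : (symmDiff A NNᶜ).Finite) :
    (symmDiff ((fun n => n + t) ⁻¹' A) NNᶜ).Finite := by
  have habs := abs_bounds t
  refine (((h.preimage (Set.injOn_of_injective (add_left_injective t))).union
    (Set.finite_Icc (-|t|) |t|))).subset fun n hn => ?_
  rw [Set.mem_symmDiff] at hn
  rcases hn with ⟨h1, h2⟩ | ⟨h1, h2⟩
  · rw [Set.mem_preimage] at h1
    have h2' : ¬ n < 0 := fun hc => h2 (mem_NNc.2 hc)
    by_cases hc : n + t < 0
    · right
      rw [Set.mem_Icc]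
      omega
    · left
      rw [Set.mem_preimage, Set.mem_symmDiff]
      exact Or.inl ⟨h1, fun hd => hc (mem_NNc.1 hd)⟩
  · have h1' : n < 0 := mem_NNc.1 h1
    rw [Set.mem_preimage] at h2
    by_cases hc : n + t ∈ A
    · exact Or.inl (by rw [Set.mem_preimage, Set.mem_symmDiff]; exact Or.inl ⟨hc, fun hd => (by
        have := mem_NNc.1 hd
        exact h2 hc)⟩)
    · by_cases hd : n + t < 0
      · exact Or.inl (by
          rw [Set.mem_preimage, Set.mem_symmDiff]
          exact Or.inr ⟨mem_NNc.2 hd, hc⟩)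
      · right
        rw [Set.mem_Icc]
        omega

lemma subOne_injective : Function.Injective (fun m : ℤ => m - 1) := fun a b h => by
  simpa using h

lemma mval_shift_one {A : Set ℤ} (h : (symmDiff A NNᶜ).Finite) :
    mval ((fun n => n + 1) ⁻¹' A) = mval A - 1 := by
  have hfin1 : (A ∩ NN).Finite := finite_inter_NN h
  have hfin2 : (NNᶜ \ A).Finite := finite_diff_NN h
  have e1 : (fun n => n + 1) ⁻¹' A ∩ NN = (fun m : ℤ => m - 1) '' ((A ∩ NN) \ {0}) := by
    ext n
    simp only [Set.mem_inter_iff, Set.mem_preimage, Set.mem_image, Set.mem_diff,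
      Set.mem_singleton_iff, mem_NN]
    constructor
    · rintro ⟨h1, h2⟩
      exact ⟨n + 1, ⟨⟨h1, by omega⟩, by omega⟩, by omega⟩
    · rintro ⟨m, ⟨⟨hm1, hm2⟩, hm3⟩, hm4⟩
      have hn : n + 1 = m := by omega
      rw [hn]
      exact ⟨hm1, by omega⟩
  have e2 : NNᶜ \ ((fun n => n + 1) ⁻¹' A) = (fun m : ℤ => m - 1) '' ((NNᶜ \ A) ∪ ({0} \ A)) := by
    ext n
    simp only [Set.mem_diff, Set.mem_preimage, Set.mem_image, Set.mem_union,
      Set.mem_singleton_iff, mem_NNc]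
    constructor
    · rintro ⟨h1, h2⟩
      refine ⟨n + 1, ?_, by omega⟩
      by_cases hz : n + 1 = 0
      · right; rw [hz] at h2 ⊢; exact ⟨rfl, h2⟩
      · left; exact ⟨by omega, h2⟩
    · rintro ⟨m, hm, hm4⟩
      have hn : n + 1 = m := by omega
      constructor
      · rcases hm with ⟨hm1, _⟩ | ⟨hm1, _⟩ <;> omega
      · rcases hm with ⟨_, hm2⟩ | ⟨_, hm2⟩ <;> (rw [hn]; exact hm2)
  rw [mval, mval, e1, e2, Set.ncard_image_of_injective _ subOne_injective,
    Set.ncard_image_of_injective _ subOne_injective]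
  by_cases h0 : (0 : ℤ) ∈ A
  · have hz : ({0} \ A : Set ℤ) = ∅ := by
      ext m; simp only [Set.mem_diff, Set.mem_singleton_iff, Set.mem_empty_iff_false,
        iff_false, not_and]
      rintro rfl; simp [h0]
    have h0' : (0 : ℤ) ∈ A ∩ NN := ⟨h0, mem_NN.2 le_rfl⟩
    rw [hz, Set.union_empty, Set.ncard_diff_singleton_of_mem h0']
    have hpos : 1 ≤ (A ∩ NN).ncard := (Set.ncard_pos hfin1).2 ⟨0, h0'⟩
    push_cast [Nat.cast_sub hpos]
    ring
  · have hz : ({0} \ A : Set ℤ) = {0} := by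
      ext m; simp only [Set.mem_diff, Set.mem_singleton_iff]
      exact ⟨fun h => h.1, fun h => ⟨h, by rw [h]; exact h0⟩⟩
    have hd : (A ∩ NN) \ {0} = A ∩ NN := by
      ext m; simp only [Set.mem_diff, Set.mem_singleton_iff, Set.mem_inter_iff]
      refine ⟨fun h => h.1, fun h => ⟨h, ?_⟩⟩
      rintro rfl; exact h0 h.1
    have hu : (NNᶜ \ A) ∪ ({0} \ A) = insert (0:ℤ) (NNᶜ \ A) := by
      rw [hz]
      ext m
      simp only [Set.mem_union, Set.mem_singleton_iff, Set.mem_insert_iff]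
      tauto
    have h0nn : (0:ℤ) ∉ NNᶜ \ A := fun hc => by
      have := mem_NNc.1 hc.1
      omega
    rw [hd, hu, Set.ncard_insert_of_notMem h0nn hfin2]
    push_cast
    ring

lemma shift_shift {A : Set ℤ} (s t : ℤ) :
    (fun n : ℤ => n + s) ⁻¹' ((fun n : ℤ => n + t) ⁻¹' A) = (fun n : ℤ => n + (t + s)) ⁻¹' A := by
  ext n
  simp only [Set.mem_preimage]
  constructor <;> intro h <;> [skip; skip] <;> first
    | (have : n + s + t = n + (t + s) := by ring
       rwa [this] at h)
    | (have : n + (t + s) = n + s + t := by ring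
       rwa [this] at h)

lemma mval_shift {A : Set ℤ} (t : ℤ) (h : (symmDiff A NNᶜ).Finite) :
    mval ((fun n => n + t) ⁻¹' A) = mval A - t := by
  induction t using Int.induction_on with
  | zero => simp
  | succ k ih =>
      have e : (fun n : ℤ => n + (k + 1)) ⁻¹' A
          = (fun n : ℤ => n + 1) ⁻¹' ((fun n : ℤ => n + k) ⁻¹' A) := by
        rw [shift_shift]
        try norm_num
      rw [e, mval_shift_one (shiftFin k h), ih]
      try ring
  | pred k ih =>
      have e : (fun n : ℤ => n + 1) ⁻¹' ((fun n : ℤ => n + (-k - 1)) ⁻¹' A)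
          = (fun n : ℤ => n + (-k : ℤ)) ⁻¹' A := by
        rw [shift_shift]
        try norm_num
      have := mval_shift_one (A := (fun n : ℤ => n + (-k - 1)) ⁻¹' A) (shiftFin _ h)
      rw [e, ih] at this
      omega

lemma mval_union_zero {A : Set ℤ} (h0 : (0 : ℤ) ∉ A) (hfin : (A ∩ NN).Finite) :
    mval (A ∪ {0}) = mval A + 1 := by
  have e1 : (A ∪ {0}) ∩ NN = insert (0:ℤ) (A ∩ NN) := by
    ext m
    simp only [Set.mem_inter_iff, Set.mem_union, Set.mem_singleton_iff, Set.mem_insert_iff, mem_NN]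
    constructor
    · rintro ⟨hm1 | hm1, hm2⟩
      · right; exact ⟨hm1, hm2⟩
      · left; exact hm1
    · rintro (rfl | ⟨hm1, hm2⟩)
      · exact ⟨Or.inr rfl, le_rfl⟩
      · exact ⟨Or.inl hm1, hm2⟩
  have e2 : NNᶜ \ (A ∪ {0}) = NNᶜ \ A := by
    ext m
    simp only [Set.mem_diff, Set.mem_union, Set.mem_singleton_iff, mem_NNc]
    constructor
    · rintro ⟨h1, h2⟩; exact ⟨h1, fun hc => h2 (Or.inl hc)⟩
    · rintro ⟨h1, h2⟩
      refine ⟨h1, ?_⟩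
      rintro (hc | rfl)
      · exact h2 hc
      · omega
  rw [mval, mval, e1, e2, Set.ncard_insert_of_notMem (fun hc => h0 hc.1) hfin]
  push_cast
  ring

lemma fin_symmdiff_union_zero {A B : Set ℤ} (h : (symmDiff A B).Finite) :
    (symmDiff (A ∪ {0}) B).Finite := by
  refine (h.union (Set.finite_singleton 0)).subset fun n hn => ?_
  rw [Set.mem_symmDiff] at hn
  rcases hn with ⟨h1, h2⟩ | ⟨h1, h2⟩
  · rcases h1 with h1 | h1
    · exact Or.inl (Set.mem_symmDiff.2 (Or.inl ⟨h1, h2⟩))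
    · exact Or.inr h1
  · exact Or.inl (Set.mem_symmDiff.2 (Or.inr ⟨h1, fun hc => h2 (Or.inl hc)⟩))

lemma fin_symmdiff_of_union_zero {A B : Set ℤ} (h : (symmDiff (A ∪ {0}) B).Finite) :
    (symmDiff A B).Finite := by
  refine (h.union (Set.finite_singleton 0)).subset fun n hn => ?_
  rw [Set.mem_symmDiff] at hn
  rcases hn with ⟨h1, h2⟩ | ⟨h1, h2⟩
  · exact Or.inl (Set.mem_symmDiff.2 (Or.inl ⟨Or.inl h1, h2⟩))
  · by_cases hz : n ∈ ({0} : Set ℤ)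
    · exact Or.inr hz
    · exact Or.inl (Set.mem_symmDiff.2 (Or.inr ⟨h1, fun hc => (by
        rcases hc with hc | hc
        · exact h2 hc
        · exact hz hc)⟩))

end MvalLemmas

section GoodPtLemmas

variable {X : Type*} [MeasurableSpace X]

lemma invZpowApply (T : X ≃ᵐ X) (j : ℤ) (x : X) : ((T⁻¹) ^ j) x = (T ^ (-j)) x := by
  rw [inv_zpow, ← zpow_neg]

lemma mInt_def (T U : X ≃ᵐ X) (x : X) : mInt T U x = mval (Pset T U x) := rfl

namespace GoodPt

variable {T U : X ≃ᵐ X} {x : X}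

lemma Pset_theta (hg : GoodPt T U x) : Pset T U x = {n : ℤ | theta T U x n < 0} := by
  ext n
  constructor
  · rintro ⟨j, hj, he⟩
    have := hg.theta_eq_iff.2 he
    simpa [this] using hj
  · intro h
    exact ⟨theta T U x n, h, hg.theta_spec n⟩

lemma notmem_Pset_zero (hg : GoodPt T U x) : (0 : ℤ) ∉ Pset T U x := by
  rw [hg.Pset_theta, Set.mem_setOf_eq, hg.theta_zero]
  omega

lemma theta_eq_zero_iff (hg : GoodPt T U x) {n : ℤ} : theta T U x n = 0 ↔ n = 0 := by
  constructor
  · intro h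
    apply hg.theta_inj
    rw [h, hg.theta_zero]
  · rintro rfl
    exact hg.theta_zero

lemma theta_step (hg : GoodPt T U x) (hg' : GoodPt T U (T x)) {a : ℤ}
    (ha : (U ^ a) x = T x) (n : ℤ) :
    theta T U (T x) n = theta T U x (n + a) - 1 := by
  rw [hg'.theta_eq_iff]
  have h1 : (U ^ n) (T x) = (U ^ (n + a)) x := by rw [zpowAddApply, ha]
  have h3 := zpowAddApply T (theta T U x (n + a) - 1) 1 x
  rw [zpow_one] at h3
  have he : theta T U x (n + a) - 1 + 1 = theta T U x (n + a) := by ring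
  rw [he] at h3
  rw [h1, ← h3]
  exact hg.theta_spec (n + a)

lemma Pset_step (hg : GoodPt T U x) (hg' : GoodPt T U (T x)) {a : ℤ}
    (ha : (U ^ a) x = T x) :
    Pset T U (T x) = (fun n : ℤ => n + a) ⁻¹' (Pset T U x ∪ {0}) := by
  ext n
  rw [hg'.Pset_theta, Set.mem_setOf_eq, theta_step hg hg' ha, Set.mem_preimage,
    Set.mem_union, hg.Pset_theta, Set.mem_setOf_eq, Set.mem_singleton_iff]
  have hz : n + a = 0 ↔ theta T U x (n + a) = 0 := (hg.theta_eq_zero_iff).symm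
  omega

lemma mInt_step (hg : GoodPt T U x) (hg' : GoodPt T U (T x)) {a : ℤ}
    (ha : (U ^ a) x = T x) (hs : (symmDiff (Pset T U x) NNᶜ).Finite) :
    mInt T U (T x) = mInt T U x + 1 - a := by
  rw [mInt_def, mInt_def, Pset_step hg hg' ha,
    mval_shift a (fin_symmdiff_union_zero hs),
    mval_union_zero hg.notmem_Pset_zero (finite_inter_NN hs)]
  try ring

lemma signPlus_step (hg : GoodPt T U x) (hg' : GoodPt T U (T x)) {a : ℤ}
    (ha : (U ^ a) x = T x) :
    (symmDiff (Pset T U (T x)) NNᶜ).Finite ↔ (symmDiff (Pset T U x) NNᶜ).Finite := by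
  constructor
  · intro h
    have h2 := shiftFin (-a) h
    have e : (fun n : ℤ => n + (-a)) ⁻¹' (Pset T U (T x)) = Pset T U x ∪ {0} := by
      rw [Pset_step hg hg' ha, shift_shift]
      have : a + -a = 0 := by ring
      rw [this]
      ext n
      simp
    rw [e] at h2
    exact fin_symmdiff_of_union_zero h2
  · intro h
    rw [Pset_step hg hg' ha]
    exact shiftFin a (fin_symmdiff_union_zero h)

lemma inv (hg : GoodPt T U x) : GoodPt T⁻¹ U x := by
  refine ⟨fun j hj hc => hg.1 (-j) (by omega) ?_, fun n => ?_, fun j => ?_⟩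
  · rwa [invZpowApply] at hc
  · obtain ⟨j, hjn⟩ := hg.2.1 n
    exact ⟨-j, by rwa [invZpowApply, neg_neg]⟩
  · obtain ⟨n, hn⟩ := hg.2.2 (-j)
    exact ⟨n, by rwa [invZpowApply]⟩

lemma Pset_inv (hg : GoodPt T U x) : Pset T⁻¹ U x = (Pset T U x ∪ {0})ᶜ := by
  ext n
  have hmem : n ∈ Pset T⁻¹ U x ↔ 0 < theta T U x n := by
    constructor
    · rintro ⟨j, hj, he⟩
      rw [invZpowApply] at he
      have := hg.theta_eq_iff.2 he
      omega
    · intro h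
      exact ⟨-(theta T U x n), by omega, by rw [invZpowApply, neg_neg]; exact hg.theta_spec n⟩
  rw [hmem, Set.mem_compl_iff, Set.mem_union, Set.mem_singleton_iff, hg.Pset_theta,
    Set.mem_setOf_eq]
  have hz : n = 0 ↔ theta T U x n = 0 := (hg.theta_eq_zero_iff).symm
  omega

lemma signMinus_inv (hg : GoodPt T U x) (h : (symmDiff (Pset T U x) NN).Finite) :
    (symmDiff (Pset T⁻¹ U x) NNᶜ).Finite := by
  rw [hg.Pset_inv]
  have e : symmDiff (Pset T U x ∪ {0})ᶜ NNᶜ = symmDiff (Pset T U x ∪ {0}) NN :=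
    compl_symmDiff_compl (a := Pset T U x ∪ {0}) (b := NN)
  rw [e]
  exact fin_symmdiff_union_zero h

lemma dichotomy (hg : GoodPt T U x) (hc : (symmDiff (fwdSet T U x) NN).Finite) :
    (symmDiff (Pset T U x) NNᶜ).Finite ∨ (symmDiff (Pset T U x) NN).Finite := by
  classical
  choose nθ hnθ using hg.theta_surj
  set θ : ℤ → ℤ := theta T U x with hθdef
  set σ : ℤ → ℤ := fun j => θ (nθ j + 1) with hσdef
  have hnθθ : ∀ n, nθ (θ n) = n := fun n => hg.theta_inj (hnθ (θ n))
  have key1 : ∀ j, U ((T ^ j) x) = (T ^ (σ j)) x := by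
    intro j
    have h1 : (T ^ j) x = (U ^ (nθ j)) x := by
      have h0 := hg.theta_spec (nθ j)
      rw [← hθdef, hnθ j] at h0
      exact h0.symm
    have h2 : U ((U ^ (nθ j)) x) = (U ^ (nθ j + 1)) x := by
      rw [add_comm, zpowAddApply, zpow_one]
    rw [h1, h2]
    exact hg.theta_spec (nθ j + 1)
  have hσinj : Function.Injective σ := by
    intro a b hab
    have h1 := hg.theta_inj hab
    have h2 : nθ a = nθ b := by omega
    rw [← hnθ a, ← hnθ b, h2]
  have hfwd : fwdSet T U x = σ '' NN := by
    ext m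
    constructor
    · rintro ⟨n, hn, he⟩
      rw [key1 n] at he
      exact ⟨n, hn, hg.uniqT he⟩
    · rintro ⟨n, hn, rfl⟩
      exact ⟨n, hn, key1 n⟩
  set D : Set ℤ := {j | ¬ ((0 ≤ j) ↔ (0 ≤ σ j))} with hDdef
  have hDfin : D.Finite := by
    have hsub : D ⊆ σ ⁻¹' (symmDiff (fwdSet T U x) NN) := by
      intro j hj
      rw [Set.mem_setOf_eq] at hj
      rw [Set.mem_preimage, Set.mem_symmDiff]
      by_cases h0 : 0 ≤ j
      · left
        refine ⟨by rw [hfwd]; exact ⟨j, h0, rfl⟩, fun hcc => hj ⟨fun _ => hcc, fun _ => h0⟩⟩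
      · right
        have h1 : 0 ≤ σ j := by
          by_contra hcc
          exact hj ⟨fun hx => absurd hx h0, fun hx => absurd hx hcc⟩
        refine ⟨h1, ?_⟩
        rw [hfwd]
        rintro ⟨j', hj', he⟩
        exact h0 (by rw [← hσinj he]; exact hj')
    exact (hc.preimage (Set.injOn_of_injective hσinj)).subset hsub
  set C : Set ℤ := θ ⁻¹' D with hCdef
  have hθinj : Function.Injective θ := fun a b h => hg.theta_inj h
  have hCfin : C.Finite := hDfin.preimage (Set.injOn_of_injective hθinj)
  have hstep : ∀ n : ℤ, n ∉ C → ((0 ≤ θ (n + 1)) ↔ (0 ≤ θ n)) := by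
    intro n hn
    have hσθ : σ (θ n) = θ (n + 1) := by
      show θ (nθ (θ n) + 1) = θ (n + 1)
      rw [hnθθ n]
    have h2 : (0 ≤ θ n) ↔ (0 ≤ σ (θ n)) := not_not.1 hn
    rw [hσθ] at h2
    exact h2.symm
  obtain ⟨b, hb⟩ := hCfin.bddAbove
  obtain ⟨c, hcb⟩ := hCfin.bddBelow
  have hup : ∀ n : ℤ, b < n → (0 ≤ θ n ↔ 0 ≤ θ (b + 1)) := by
    intro n hn
    have key : ∀ k : ℕ, (0 ≤ θ (b + 1 + k) ↔ 0 ≤ θ (b + 1)) := by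
      intro k
      induction k with
      | zero => simp
      | succ k ih =>
          have hnot : (b + 1 + (k : ℤ)) ∉ C := fun hcc => by
            have := hb hcc
            omega
          have hs := hstep _ hnot
          have he : (b + 1 + ((k + 1 : ℕ) : ℤ)) = (b + 1 + (k : ℤ)) + 1 := by push_cast; ring
          rw [he, hs]
          exact ih
    have he : n = b + 1 + ((n - (b + 1)).toNat : ℤ) := by
      rw [Int.toNat_of_nonneg (by omega)]
      ring
    rw [he]
    exact key _
  have hdown : ∀ n : ℤ, n < c → (0 ≤ θ n ↔ 0 ≤ θ (c - 1)) := by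
    intro n hn
    have key : ∀ k : ℕ, (0 ≤ θ (c - 1 - k) ↔ 0 ≤ θ (c - 1)) := by
      intro k
      induction k with
      | zero => simp
      | succ k ih =>
          have hnot : (c - 1 - ((k + 1 : ℕ) : ℤ)) ∉ C := fun hcc => by
            have := hcb hcc
            push_cast at this
            omega
          have hs := hstep _ hnot
          have he : (c - 1 - ((k + 1 : ℕ) : ℤ)) + 1 = c - 1 - (k : ℤ) := by push_cast; ring
          rw [he] at hs
          exact hs.symm.trans ih
    have he : n = c - 1 - ((c - 1 - n).toNat : ℤ) := by
      rw [Int.toNat_of_nonneg (by omega)]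
      ring
    rw [he]
    exact key _
  have hPinf : {n : ℤ | θ n < 0}.Infinite := by
    apply Set.infinite_of_injective_forall_mem (f := fun k : ℕ => nθ (-1 - k))
    · intro a b hab
      have hab' : nθ (-1 - (a : ℤ)) = nθ (-1 - (b : ℤ)) := hab
      have h1 : (-1 - (a : ℤ)) = -1 - (b : ℤ) := by
        rw [← hnθ (-1 - (a : ℤ)), ← hnθ (-1 - (b : ℤ)), hab']
      omega
    · intro k
      rw [Set.mem_setOf_eq, hnθ]
      omega
  have hNinf : {n : ℤ | 0 ≤ θ n}.Infinite := by
    apply Set.infinite_of_injective_forall_mem (f := fun k : ℕ => nθ k)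
    · intro a b hab
      have hab' : nθ (a : ℤ) = nθ (b : ℤ) := hab
      have h1 : (a : ℤ) = b := by rw [← hnθ (a : ℤ), ← hnθ (b : ℤ), hab']
      omega
    · intro k
      rw [Set.mem_setOf_eq, hnθ]
      omega
  have hPset : Pset T U x = {n : ℤ | θ n < 0} := hg.Pset_theta
  by_cases e1 : 0 ≤ θ (b + 1) <;> by_cases e2 : 0 ≤ θ (c - 1)
  · exfalso
    apply hPinf
    refine (Set.finite_Icc c b).subset fun n hn => ?_
    rw [Set.mem_setOf_eq] at hn
    rw [Set.mem_Icc]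
    constructor
    · by_contra hcc
      have := (hdown n (by omega)).2 e2
      omega
    · by_contra hcc
      have := (hup n (by omega)).2 e1
      omega
  · -- sign plus
    left
    have hlo1 : min (c - 1) (-1) ≤ c - 1 := min_le_left _ _
    have hlo2 : min (c - 1) (-1) ≤ -1 := min_le_right _ _
    have hhi1 : b + 1 ≤ max (b + 1) 0 := le_max_left _ _
    have hhi2 : (0 : ℤ) ≤ max (b + 1) 0 := le_max_right _ _
    refine (Set.finite_Icc (min (c - 1) (-1)) (max (b + 1) 0)).subset fun n hn => ?_
    rw [Set.mem_symmDiff, hPset] at hn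
    rw [Set.mem_Icc]
    rcases hn with ⟨h1, h2⟩ | ⟨h1, h2⟩
    · rw [Set.mem_setOf_eq] at h1
      have h2' : 0 ≤ n := by
        by_contra hcc
        exact h2 (mem_NNc.2 (by omega))
      have hn_le : n ≤ b := by
        by_contra hcc
        have := (hup n (by omega)).2 e1
        omega
      omega
    · have h1' : n < 0 := mem_NNc.1 h1
      rw [Set.mem_setOf_eq] at h2
      have hn_ge : c ≤ n := by
        by_contra hcc
        have := (hdown n (by omega)).1 (by omega)
        omega
      omega
  · -- sign minus
    right
    have hlo1 : min (c - 1) (-1) ≤ c - 1 := min_le_left _ _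
    have hlo2 : min (c - 1) (-1) ≤ -1 := min_le_right _ _
    have hhi1 : b + 1 ≤ max (b + 1) 0 := le_max_left _ _
    have hhi2 : (0 : ℤ) ≤ max (b + 1) 0 := le_max_right _ _
    refine (Set.finite_Icc (min (c - 1) (-1)) (max (b + 1) 0)).subset fun n hn => ?_
    rw [Set.mem_symmDiff, hPset] at hn
    rw [Set.mem_Icc]
    rcases hn with ⟨h1, h2⟩ | ⟨h1, h2⟩
    · rw [Set.mem_setOf_eq] at h1
      have h2' : n < 0 := by
        by_contra hcc
        exact h2 (mem_NN.2 (by omega))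
      have hn_ge : c ≤ n := by
        by_contra hcc
        have := (hdown n (by omega)).2 e2
        omega
      omega
    · have h1' : 0 ≤ n := mem_NN.1 h1
      rw [Set.mem_setOf_eq] at h2
      have hn_le : n ≤ b := by
        by_contra hcc
        have := (hup n (by omega)).1 (by omega)
        omega
      omega
  · exfalso
    apply hNinf
    refine (Set.finite_Icc c b).subset fun n hn => ?_
    rw [Set.mem_setOf_eq] at hn
    rw [Set.mem_Icc]
    constructor
    · by_contra hcc
      have := (hdown n (by omega)).1 hn
      omega
    · by_contra hcc
      have := (hup n (by omega)).1 hn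
      omega

end GoodPt

end GoodPtLemmas




section MeasureInfra

variable {X : Type*} [MeasurableSpace X] {μ : Measure X}

lemma MCP.coe_mul (a b : MCP μ) : ((a * b : MCP μ) : X ≃ᵐ X) = (a : X ≃ᵐ X) * (b : X ≃ᵐ X) := rfl

lemma MCP.coe_one : ((1 : MCP μ) : X ≃ᵐ X) = 1 := rfl

lemma MCP.coe_inv (a : MCP μ) : ((a⁻¹ : MCP μ) : X ≃ᵐ X) = (a : X ≃ᵐ X)⁻¹ := rfl

lemma MCP.coe_zpow' (a : MCP μ) (n : ℤ) : ((a ^ n : MCP μ) : X ≃ᵐ X) = (a : X ≃ᵐ X) ^ n :=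
  SubgroupClass.coe_zpow a n

lemma MCP.qmp_zpow (a : MCP μ) (n : ℤ) :
    Measure.QuasiMeasurePreserving (⇑((a : X ≃ᵐ X) ^ n)) μ μ := by
  have := MCP.qmp μ (a ^ n)
  rwa [MCP.coe_zpow'] at this

lemma MCP.preimage_null_zpow (a : MCP μ) (n : ℤ) {N : Set X} (hN : μ N = 0) :
    μ ((⇑((a : X ≃ᵐ X) ^ n)) ⁻¹' N) = 0 :=
  (MCP.qmp_zpow a n).preimage_null hN

/-- On a conull set, a.e. equal elements of `MCP μ` have all their powers equal. -/
lemma ae_zpow_eq (A B : MCP μ) (hAB : ∀ᵐ x ∂μ, (A : X ≃ᵐ X) x = (B : X ≃ᵐ X) x) :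
    ∀ᵐ x ∂μ, ∀ n : ℤ, ((A : X ≃ᵐ X) ^ n) x = ((B : X ≃ᵐ X) ^ n) x := by
  set N : Set X := {x | (A : X ≃ᵐ X) x ≠ (B : X ≃ᵐ X) x} with hNdef
  have hN : μ N = 0 := by
    rw [← MeasureTheory.ae_iff] at *
    exact hAB
  have hM : μ (⋃ n : ℤ, (⇑((A : X ≃ᵐ X) ^ n)) ⁻¹' N) = 0 :=
    measure_iUnion_null fun n => MCP.preimage_null_zpow A n hN
  rw [MeasureTheory.ae_iff]
  refine measure_mono_null (fun x hx => ?_) hM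
  simp only [Set.mem_setOf_eq] at hx
  push_neg at hx
  obtain ⟨n, hn⟩ := hx
  by_contra hxM
  apply hn
  have horb : ∀ m : ℤ, ((A : X ≃ᵐ X) ^ m) x ∉ N := by
    intro m hm
    exact hxM (Set.mem_iUnion.2 ⟨m, hm⟩)
  have key : ∀ m : ℤ, ((A : X ≃ᵐ X) ^ m) x = ((B : X ≃ᵐ X) ^ m) x := by
    intro m
    induction m using Int.induction_on with
    | zero => simp
    | succ k ih =>
        have e1 : ((A : X ≃ᵐ X) ^ (k + 1 : ℤ)) x = (A : X ≃ᵐ X) (((A : X ≃ᵐ X) ^ (k : ℤ)) x) := by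
          rw [add_comm, zpowAddApply, zpow_one]
        have e2 : ((B : X ≃ᵐ X) ^ (k + 1 : ℤ)) x = (B : X ≃ᵐ X) (((B : X ≃ᵐ X) ^ (k : ℤ)) x) := by
          rw [add_comm, zpowAddApply, zpow_one]
        have hAk := horb k
        rw [hNdef, Set.mem_setOf_eq] at hAk
        push_neg at hAk
        rw [e1, e2, ← ih, hAk]
    | pred k ih =>
        have e1 : ((A : X ≃ᵐ X) ^ (-k - 1 : ℤ)) x
            = (A : X ≃ᵐ X).symm (((A : X ≃ᵐ X) ^ (-k : ℤ)) x) := by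
          have : (-k - 1 : ℤ) = -1 + (-k) := by ring
          rw [this, zpowAddApply, zpow_neg_one, invApply]
        have e2 : ((B : X ≃ᵐ X) ^ (-k - 1 : ℤ)) x
            = (B : X ≃ᵐ X).symm (((B : X ≃ᵐ X) ^ (-k : ℤ)) x) := by
          have : (-k - 1 : ℤ) = -1 + (-k) := by ring
          rw [this, zpowAddApply, zpow_neg_one, invApply]
        have hAk := horb (-k - 1)
        rw [hNdef, Set.mem_setOf_eq] at hAk
        push_neg at hAk
        -- A (A^(-k-1) x) = B (A^(-k-1) x), and A (A^(-k-1) x) = A^(-k) x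
        have e3 : (A : X ≃ᵐ X) (((A : X ≃ᵐ X) ^ (-k - 1 : ℤ)) x) = ((A : X ≃ᵐ X) ^ (-k : ℤ)) x := by
          have h := zpowAddApply (A : X ≃ᵐ X) 1 (-k - 1) x
          rw [zpow_one] at h
          have h2 : (1 + (-k - 1) : ℤ) = -k := by ring
          rw [h2] at h
          exact h.symm
        rw [e1, e2, ← ih, ← e3]
        conv_rhs => rw [hAk]
        rw [MeasurableEquiv.symm_apply_apply, MeasurableEquiv.symm_apply_apply]
  exact key n

/-- Evaluation of a word in `T, T⁻¹, U, U⁻¹`. -/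
def wEval (T U : MCP μ) (w : List (Fin 4)) : MCP μ :=
  (w.map (fun i : Fin 4 => if i = 0 then T else if i = 1 then T⁻¹ else if i = 2 then U else U⁻¹)).prod

lemma wEval_nil (T U : MCP μ) : wEval T U [] = 1 := rfl

lemma wEval_append (T U : MCP μ) (w : List (Fin 4)) (i : Fin 4) :
    wEval T U (w ++ [i]) = wEval T U w *
      (if i = 0 then T else if i = 1 then T⁻¹ else if i = 2 then U else U⁻¹) := by
  rw [wEval, List.map_append, List.prod_append, wEval]
  simp

/-- The saturation of a conull measurable set: a conull measurable subset invariant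
under `T, T⁻¹, U, U⁻¹`. -/
lemma saturate (T U : MCP μ) {C : Set X} (hC : MeasurableSet C) (hCae : ∀ᵐ x ∂μ, x ∈ C) :
    ∃ G : Set X, MeasurableSet G ∧ (∀ᵐ x ∂μ, x ∈ G) ∧ G ⊆ C ∧
      (∀ x ∈ G, (T : X ≃ᵐ X) x ∈ G ∧ (T : X ≃ᵐ X).symm x ∈ G ∧
        (U : X ≃ᵐ X) x ∈ G ∧ (U : X ≃ᵐ X).symm x ∈ G) := by
  classical
  refine ⟨⋂ w : List (Fin 4), (⇑((wEval T U w : MCP μ) : X ≃ᵐ X)) ⁻¹' C, ?_, ?_, ?_, ?_⟩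
  · exact MeasurableSet.iInter fun w => ((wEval T U w : MCP μ) : X ≃ᵐ X).measurable hC
  · refine (ae_all_iff.2 ?_).mono fun x hx => Set.mem_iInter.2 hx
    intro w
    have h0 : μ Cᶜ = 0 := by
      rw [Set.compl_def]
      exact MeasureTheory.ae_iff.1 hCae
    have h1 : μ ((⇑((wEval T U w : MCP μ) : X ≃ᵐ X)) ⁻¹' Cᶜ) = 0 :=
      (MCP.qmp μ (wEval T U w)).preimage_null h0
    rw [MeasureTheory.ae_iff]
    exact measure_mono_null (fun x hx => by simpa using hx) h1
  · intro x hx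
    have := Set.mem_iInter.1 hx []
    simpa [wEval_nil, MCP.coe_one] using this
  · intro x hx
    have key : ∀ i : Fin 4, ((if i = 0 then T else if i = 1 then T⁻¹ else if i = 2 then U
        else U⁻¹ : MCP μ) : X ≃ᵐ X) x ∈
          ⋂ w : List (Fin 4), (⇑((wEval T U w : MCP μ) : X ≃ᵐ X)) ⁻¹' C := by
      intro i
      rw [Set.mem_iInter]
      intro w
      have := Set.mem_iInter.1 hx (w ++ [i])
      rw [Set.mem_preimage, wEval_append, MCP.coe_mul] at this
      exact this
    refine ⟨?_, ?_, ?_, ?_⟩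
    · simpa using key 0
    · have := key 1
      simpa [MCP.coe_inv, invApply] using this
    · simpa using key 2
    · have := key 3
      simpa [MCP.coe_inv, invApply] using this

lemma zpow_mem_closed {G : Set X} {V : X ≃ᵐ X} (h1 : ∀ x ∈ G, V x ∈ G)
    (h2 : ∀ x ∈ G, V.symm x ∈ G) : ∀ x ∈ G, ∀ n : ℤ, (V ^ n) x ∈ G := by
  intro x hx n
  induction n using Int.induction_on with
  | zero => simpa using hx
  | succ k ih =>
      have e : (V ^ (k + 1 : ℤ)) x = V ((V ^ (k : ℤ)) x) := by
        rw [add_comm, zpowAddApply, zpow_one]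
      rw [e]
      exact h1 _ ih
  | pred k ih =>
      have e : (V ^ (-k - 1 : ℤ)) x = V.symm ((V ^ (-k : ℤ)) x) := by
        have : (-k - 1 : ℤ) = -1 + (-k) := by ring
        rw [this, zpowAddApply, zpow_neg_one, invApply]
      rw [e]
      exact h2 _ ih

end MeasureInfra

section MeasurabilityInfra

variable {X : Type*} [MeasurableSpace X] [StandardBorelSpace X]

lemma measurableSet_eqSet {f g : X → X} (hf : Measurable f) (hg : Measurable g) :
    MeasurableSet {x | f x = g x} := by
  letI := upgradeStandardBorel X
  exact MeasureTheory.StronglyMeasurable.measurableSet_eq_fun hf.stronglyMeasurable hg.stronglyMeasurable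

variable (T U : X ≃ᵐ X)

lemma measurableSet_memPset (n : ℤ) : MeasurableSet {x : X | n ∈ Pset T U x} := by
  have : {x : X | n ∈ Pset T U x} = ⋃ j : ℤ, {x : X | j < 0 ∧ (U ^ n) x = (T ^ j) x} := by
    ext x
    simp only [Set.mem_setOf_eq, Set.mem_iUnion]
    exact Iff.rfl
  rw [this]
  refine MeasurableSet.iUnion fun j => ?_
  by_cases hj : j < 0
  · have : {x : X | j < 0 ∧ (U ^ n) x = (T ^ j) x} = {x : X | (U ^ n) x = (T ^ j) x} := by
      ext x; simp [hj]
    rw [this]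
    exact measurableSet_eqSet (U ^ n).measurable (T ^ j).measurable
  · have : {x : X | j < 0 ∧ (U ^ n) x = (T ^ j) x} = ∅ := by
      ext x; simp [hj]
    rw [this]
    exact MeasurableSet.empty

lemma measurableSet_goodPt : MeasurableSet {x : X | GoodPt T U x} := by
  have e : {x : X | GoodPt T U x} =
      (⋂ j : ℤ, {x : X | j ≠ 0 → (T ^ j) x ≠ x}) ∩
      ((⋂ n : ℤ, ⋃ j : ℤ, {x : X | (U ^ n) x = (T ^ j) x}) ∩
       (⋂ j : ℤ, ⋃ n : ℤ, {x : X | (U ^ n) x = (T ^ j) x})) := by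
    ext x
    simp only [GoodPt, Set.mem_inter_iff, Set.mem_iInter, Set.mem_iUnion, Set.mem_setOf_eq]
  rw [e]
  refine MeasurableSet.inter ?_ (MeasurableSet.inter ?_ ?_)
  · refine MeasurableSet.iInter fun j => ?_
    by_cases hj : j = 0
    · have : {x : X | j ≠ 0 → (T ^ j) x ≠ x} = Set.univ := by
        ext x; simp [hj]
      rw [this]; exact MeasurableSet.univ
    · have : {x : X | j ≠ 0 → (T ^ j) x ≠ x} = {x : X | (T ^ j) x = x}ᶜ := by
        ext x; simp [hj]
      rw [this]
      exact (measurableSet_eqSet (T ^ j).measurable measurable_id).compl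
  · exact MeasurableSet.iInter fun n => MeasurableSet.iUnion fun j =>
      measurableSet_eqSet (U ^ n).measurable (T ^ j).measurable
  · exact MeasurableSet.iInter fun j => MeasurableSet.iUnion fun n =>
      measurableSet_eqSet (U ^ n).measurable (T ^ j).measurable

lemma finite_symmDiff_NNc_iff (A : Set ℤ) :
    (symmDiff A NNᶜ).Finite ↔
      ∃ N : ℕ, ∀ n : ℤ, ((N : ℤ) < n → n ∉ A) ∧ (n < -(N : ℤ) → n ∈ A) := by
  constructor
  · intro h
    obtain ⟨b, hb⟩ := h.bddAbove
    obtain ⟨c, hc⟩ := h.bddBelow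
    refine ⟨(max |b| |c|).toNat, fun n => ⟨fun hn hA => ?_, fun hn => ?_⟩⟩
    · have hmem : n ∈ symmDiff A NNᶜ := Set.mem_symmDiff.2 (Or.inl ⟨hA, fun hcc => by
        have := mem_NNc.1 hcc
        have h1 : (0:ℤ) ≤ (max |b| |c|).toNat := Int.ofNat_nonneg _
        omega⟩)
      have h1 := hb hmem
      have h2 : |b| ≤ max |b| |c| := le_max_left _ _
      have h3 : b ≤ |b| := le_abs_self b
      have h4 : ((max |b| |c|).toNat : ℤ) = max |b| |c| := Int.toNat_of_nonneg
        (le_trans (abs_nonneg b) h2)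
      omega
    · by_contra hA
      have hmem : n ∈ symmDiff A NNᶜ := Set.mem_symmDiff.2 (Or.inr ⟨mem_NNc.2 (by
        have h1 : (0:ℤ) ≤ ((max |b| |c|).toNat : ℤ) := Int.ofNat_nonneg _
        omega), hA⟩)
      have h1 := hc hmem
      have h2 : |c| ≤ max |b| |c| := le_max_right _ _
      have h3 : -|c| ≤ c := neg_abs_le c
      have h4 : ((max |b| |c|).toNat : ℤ) = max |b| |c| := Int.toNat_of_nonneg
        (le_trans (abs_nonneg b) (le_max_left _ _))
      omega
  · rintro ⟨N, hN⟩
    refine (Set.finite_Icc (-(N:ℤ)) N).subset fun n hn => ?_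
    rw [Set.mem_symmDiff] at hn
    rw [Set.mem_Icc]
    rcases hn with ⟨h1, h2⟩ | ⟨h1, h2⟩
    · have h2' : ¬ n < 0 := fun hcc => h2 (mem_NNc.2 hcc)
      have := (hN n).1
      constructor
      · omega
      · by_contra hcc
        exact (this (by omega)) h1
    · have h1' : n < 0 := mem_NNc.1 h1
      have := (hN n).2
      constructor
      · by_contra hcc
        exact h2 (this (by omega))
      · omega

lemma measurableSet_signPlus : MeasurableSet {x : X | (symmDiff (Pset T U x) NNᶜ).Finite} := by
  have e : {x : X | (symmDiff (Pset T U x) NNᶜ).Finite} =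
      ⋃ N : ℕ, ⋂ n : ℤ, ({x : X | (N : ℤ) < n → n ∉ Pset T U x} ∩
        {x : X | n < -(N : ℤ) → n ∈ Pset T U x}) := by
    ext x
    simp only [Set.mem_iUnion, Set.mem_iInter, Set.mem_inter_iff, Set.mem_setOf_eq,
      finite_symmDiff_NNc_iff]
    try (constructor
         · rintro ⟨N, hN⟩; exact ⟨N, fun n => (hN n)⟩
         · rintro ⟨N, hN⟩; exact ⟨N, fun n => (hN n)⟩)
  rw [e]
  refine MeasurableSet.iUnion fun N => MeasurableSet.iInter fun n => MeasurableSet.inter ?_ ?_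
  · by_cases hn : (N : ℤ) < n
    · have : {x : X | (N : ℤ) < n → n ∉ Pset T U x} = {x : X | n ∈ Pset T U x}ᶜ := by
        ext x; simp [hn]
      rw [this]; exact (measurableSet_memPset T U n).compl
    · have : {x : X | (N : ℤ) < n → n ∉ Pset T U x} = Set.univ := by
        ext x; simp [hn]
      rw [this]; exact MeasurableSet.univ
  · by_cases hn : n < -(N : ℤ)
    · have : {x : X | n < -(N : ℤ) → n ∈ Pset T U x} = {x : X | n ∈ Pset T U x} := by
        ext x; simp [hn]
      rw [this]; exact measurableSet_memPset T U n
    · have : {x : X | n < -(N : ℤ) → n ∈ Pset T U x} = Set.univ := by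
        ext x; simp [hn]
      rw [this]; exact MeasurableSet.univ

/-- Measurability of `x ↦ ncard {n | x ∈ Q n}` for measurable families over `ℤ`. -/
lemma measurable_ncard_mem {Q : ℤ → Set X} (hQ : ∀ n, MeasurableSet (Q n)) :
    Measurable fun x => ({n : ℤ | x ∈ Q n}.ncard) := by
  classical
  have hEqF : ∀ F : Finset ℤ, MeasurableSet {x : X | {n : ℤ | x ∈ Q n} = ↑F} := by
    intro F
    have e : {x : X | {n : ℤ | x ∈ Q n} = ↑F} =
        ⋂ n : ℤ, (if n ∈ F then Q n else (Q n)ᶜ) := by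
      ext x
      simp only [Set.mem_setOf_eq, Set.mem_iInter]
      constructor
      · intro h n
        by_cases hn : n ∈ F
        · simp only [hn, if_true]
          have : n ∈ ({n : ℤ | x ∈ Q n}) := by rw [h]; exact_mod_cast hn
          exact this
        · simp only [hn, if_false]
          intro hc
          have : n ∈ ({n : ℤ | x ∈ Q n}) := hc
          rw [h] at this
          exact hn (by exact_mod_cast this)
      · intro h
        ext n
        have := h n
        by_cases hn : n ∈ F
        · simp only [hn, if_true] at this
          simp only [Set.mem_setOf_eq, Finset.coe_sort_coe]
          constructor
          · intro _; exact_mod_cast hn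
          · intro _; exact this
        · simp only [hn, if_false] at this
          simp only [Set.mem_setOf_eq]
          constructor
          · intro hc; exact absurd hc this
          · intro hc; exact absurd (by exact_mod_cast hc : n ∈ F) hn
    rw [e]
    refine MeasurableSet.iInter fun n => ?_
    by_cases hn : n ∈ F
    · simpa [hn] using hQ n
    · simpa [hn] using (hQ n).compl
  have hFinSet : MeasurableSet {x : X | {n : ℤ | x ∈ Q n}.Finite} := by
    have e : {x : X | {n : ℤ | x ∈ Q n}.Finite} =
        ⋃ F : Finset ℤ, {x : X | {n : ℤ | x ∈ Q n} = ↑F} := by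
      ext x
      simp only [Set.mem_setOf_eq, Set.mem_iUnion]
      constructor
      · intro h
        exact ⟨h.toFinset, by simp⟩
      · rintro ⟨F, hF⟩
        rw [hF]
        exact F.finite_toSet
    rw [e]
    exact MeasurableSet.iUnion hEqF
  apply measurable_to_countable'
  intro c
  by_cases hc : c = 0
  · subst hc
    have e : (fun x => ({n : ℤ | x ∈ Q n}.ncard)) ⁻¹' {0} =
        {x : X | {n : ℤ | x ∈ Q n}.Finite}ᶜ ∪
          {x : X | {n : ℤ | x ∈ Q n} = ↑(∅ : Finset ℤ)} := by
      ext x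
      simp only [Set.mem_preimage, Set.mem_singleton_iff, Set.mem_union, Set.mem_compl_iff,
        Set.mem_setOf_eq, Finset.coe_empty]
      constructor
      · intro h
        by_cases hfin : {n : ℤ | x ∈ Q n}.Finite
        · right
          exact (Set.ncard_eq_zero hfin).1 h
        · left; exact hfin
      · rintro (h | h)
        · exact (Set.Infinite.ncard h)
        · rw [h]; simp
    rw [e]
    exact (hFinSet.compl).union (hEqF ∅)
  · have e : (fun x => ({n : ℤ | x ∈ Q n}.ncard)) ⁻¹' {c} =
        ⋃ F : {F : Finset ℤ // F.card = c}, {x : X | {n : ℤ | x ∈ Q n} = ↑F.1} := by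
      ext x
      simp only [Set.mem_preimage, Set.mem_singleton_iff, Set.mem_iUnion, Set.mem_setOf_eq]
      constructor
      · intro h
        have hfin : {n : ℤ | x ∈ Q n}.Finite := by
          by_contra hinf
          rw [Set.Infinite.ncard hinf] at h
          exact hc h.symm
        refine ⟨⟨hfin.toFinset, ?_⟩, by simp⟩
        rw [← Set.ncard_eq_toFinset_card _ hfin]
        exact h
      · rintro ⟨⟨F, hF⟩, h⟩
        rw [h, Set.ncard_coe_finset]
        exact hF
    rw [e]
    exact MeasurableSet.iUnion fun F => hEqF F.1

lemma measurable_mInt (T U : X ≃ᵐ X) : Measurable fun x => mInt T U x := by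
  classical
  have h1 : Measurable fun x : X =>
      ({n : ℤ | x ∈ (if 0 ≤ n then {y : X | n ∈ Pset T U y} else (∅ : Set X))}.ncard) := by
    apply measurable_ncard_mem
    intro n
    by_cases hn : 0 ≤ n
    · simpa [hn] using measurableSet_memPset T U n
    · simpa [hn] using (MeasurableSet.empty : MeasurableSet (∅ : Set X))
  have h2 : Measurable fun x : X =>
      ({n : ℤ | x ∈ (if n < 0 then {y : X | n ∈ Pset T U y}ᶜ else (∅ : Set X))}.ncard) := by
    apply measurable_ncard_mem
    intro n
    by_cases hn : n < 0
    · simpa [hn] using (measurableSet_memPset T U n).compl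
    · simpa [hn] using (MeasurableSet.empty : MeasurableSet (∅ : Set X))
  have e1 : ∀ x : X, {n : ℤ | x ∈ (if 0 ≤ n then {y : X | n ∈ Pset T U y} else (∅ : Set X))}
      = Pset T U x ∩ NN := by
    intro x
    ext n
    by_cases hn : 0 ≤ n <;> simp [hn, mem_NN, Set.mem_setOf_eq, Set.mem_inter_iff]
  have e2 : ∀ x : X, {n : ℤ | x ∈ (if n < 0 then {y : X | n ∈ Pset T U y}ᶜ else (∅ : Set X))}
      = NNᶜ \ Pset T U x := by
    intro x
    ext n
    by_cases hn : n < 0 <;>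
      simp [hn, mem_NNc, Set.mem_setOf_eq, Set.mem_diff, Set.mem_compl_iff, mem_NN]
  simp only [e1] at h1
  simp only [e2] at h2
  have : (fun x => mInt T U x)
      = fun x => ((Pset T U x ∩ NN).ncard : ℤ) - ((NNᶜ \ Pset T U x).ncard : ℤ) := rfl
  rw [this]
  exact Measurable.sub ((measurable_of_countable (fun k : ℕ => (k : ℤ))).comp h1)
    ((measurable_of_countable (fun k : ℕ => (k : ℤ))).comp h2)

lemma measurable_zpow_mInt (T U V : X ≃ᵐ X) :
    Measurable fun x => (V ^ (mInt T U x)) x := by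
  have hprod : Measurable fun p : X × ℤ => (V ^ p.2) p.1 :=
    measurable_from_prod_countable_left fun n => (V ^ n).measurable
  exact hprod.comp (measurable_id.prodMk (measurable_mInt T U))

end MeasurabilityInfra


section CoreConstruction

variable {X : Type*} [MeasurableSpace X] [StandardBorelSpace X]

/-- The key construction: an element of the full group of `T` conjugating `T` to `U`
on the good set `Gp`. -/
lemma core_construction (μ : Measure X) (T U : X ≃ᵐ X) {Gp : Set X}
    (hGm : MeasurableSet Gp)
    (hq : ∀ k : ℤ, Measure.QuasiMeasurePreserving (⇑(U ^ k)) μ μ)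
    (hGgood : ∀ x ∈ Gp, GoodPt T U x)
    (hGsign : ∀ x ∈ Gp, (symmDiff (Pset T U x) NNᶜ).Finite)
    (hGcl : ∀ x ∈ Gp, T x ∈ Gp ∧ T.symm x ∈ Gp ∧ U x ∈ Gp ∧ U.symm x ∈ Gp) :
    ∃ S : X ≃ᵐ X, (μ.map S ≪ μ ∧ μ ≪ μ.map S) ∧
      (∀ x : X, ∃ n : ℤ, S x = (T ^ n) x) ∧
      (∀ x ∈ Gp, S (T x) = U (S x)) := by
  classical
  set m : X → ℤ := fun x => mInt T U x with hmdef
  set s : X → X := fun x => if x ∈ Gp then (U ^ (m x)) x else x with hsdef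
  have hUzp : ∀ x ∈ Gp, ∀ n : ℤ, (U ^ n) x ∈ Gp :=
    zpow_mem_closed (fun x hx => (hGcl x hx).2.2.1) (fun x hx => (hGcl x hx).2.2.2)
  have hTzp : ∀ x ∈ Gp, ∀ n : ℤ, (T ^ n) x ∈ Gp :=
    zpow_mem_closed (fun x hx => (hGcl x hx).1) (fun x hx => (hGcl x hx).2.1)
  have hs_in : ∀ x ∈ Gp, s x = (U ^ (m x)) x := fun x hx => if_pos hx
  have hs_out : ∀ x, x ∉ Gp → s x = x := fun x hx => if_neg hx
  have hs_mem : ∀ x ∈ Gp, s x ∈ Gp := by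
    intro x hx
    rw [hs_in x hx]
    exact hUzp x hx (m x)
  -- the intertwining relation on `Gp`
  have key : ∀ x ∈ Gp, s (T x) = U (s x) := by
    intro x hx
    have hgx := hGgood x hx
    obtain ⟨a, ha⟩ := hgx.2.2 1
    rw [zpow_one] at ha
    have hTx : T x ∈ Gp := (hGcl x hx).1
    have hgTx := hGgood _ hTx
    have hmstep : mInt T U (T x) = mInt T U x + 1 - a :=
      hgx.mInt_step hgTx ha (hGsign x hx)
    rw [hs_in _ hTx, hs_in x hx]
    have eL : (U ^ (m (T x) + a)) x = (U ^ (m (T x))) (T x) := by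
      rw [zpowAddApply, ha]
    have eR : U ((U ^ (m x)) x) = (U ^ (1 + m x)) x := by
      rw [zpowAddApply, zpow_one]
    rw [← eL, eR]
    have e2 : m (T x) + a = 1 + m x := by
      simp only [hmdef]
      omega
    rw [e2]
  have key_iterate : ∀ x ∈ Gp, ∀ n : ℤ, s ((T ^ n) x) = (U ^ n) (s x) := by
    intro x hx n
    induction n using Int.induction_on with
    | zero => simp
    | succ k ih =>
        have e : (T ^ (k + 1 : ℤ)) x = T ((T ^ (k : ℤ)) x) := by
          rw [add_comm, zpowAddApply, zpow_one]
        have e2 : (U ^ (k + 1 : ℤ)) (s x) = U ((U ^ (k : ℤ)) (s x)) := by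
          rw [add_comm, zpowAddApply, zpow_one]
        rw [e, e2, key _ (hTzp x hx k), ih]
    | pred k ih =>
        have hyG : (T ^ (-k - 1 : ℤ)) x ∈ Gp := hTzp x hx _
        have hTy : T ((T ^ (-k - 1 : ℤ)) x) = (T ^ (-k : ℤ)) x := by
          have h := zpowAddApply T 1 (-k - 1) x
          rw [zpow_one] at h
          have h2 : (1 + (-k - 1) : ℤ) = -k := by ring
          rw [h2] at h
          exact h.symm
        have hk := key _ hyG
        rw [hTy, ih] at hk
        -- hk : (U^(-k)) (s x) = U (s ((T^(-k-1)) x))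
        have e2 : (U ^ (-k - 1 : ℤ)) (s x) = U.symm ((U ^ (-k : ℤ)) (s x)) := by
          have h : (-k - 1 : ℤ) = -1 + (-k) := by ring
          rw [h, zpowAddApply, zpow_neg_one, invApply]
        rw [e2, hk, MeasurableEquiv.symm_apply_apply]
  -- injectivity
  have hinj : Function.Injective s := by
    intro x y hxy
    by_cases hx : x ∈ Gp <;> by_cases hy : y ∈ Gp
    · have hsx := hs_in x hx
      have hsy := hs_in y hy
      rw [hsx, hsy] at hxy
      have hyx : y = (U ^ (m x - m y)) x := by
        have e1 : (U ^ (m x - m y)) x = (U ^ (-(m y))) ((U ^ (m x)) x) := by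
          rw [← zpowAddApply]
          have : (-(m y) + m x : ℤ) = m x - m y := by ring
          rw [this]
        rw [e1, hxy, ← zpowAddApply]
        simp
      have hgx := hGgood x hx
      set d := theta T U x (m x - m y) with hddef
      have hd : y = (T ^ d) x := by
        have h := hgx.theta_spec (m x - m y)
        rw [← hyx] at h
        rw [hddef]
        exact h
      have hsyx : s y = (U ^ d) (s x) := by
        rw [hd]
        exact key_iterate x hx d
      have hs_eq : s x = s y := by rw [hsx, hsy, hxy]
      have hgs := hGgood _ (hs_mem x hx)
      have hzero : d = 0 := by
        apply hgs.upow_eq (m := 0)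
        rw [← hsyx, ← hs_eq]
        simp
      rw [hzero] at hd
      rw [hd]
      simp
    · exfalso
      apply hy
      have := hs_mem x hx
      rw [hxy, hs_out y hy] at this
      exact this
    · exfalso
      apply hx
      have := hs_mem y hy
      rw [← hxy, hs_out x hx] at this
      exact this
    · rw [hs_out x hx, hs_out y hy] at hxy
      exact hxy
  -- surjectivity
  have hsurj : Function.Surjective s := by
    intro z
    by_cases hz : z ∈ Gp
    · refine ⟨(T ^ (-(m z))) z, ?_⟩
      have := key_iterate z hz (-(m z))
      rw [this, hs_in z hz, ← zpowAddApply]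
      simp
    · exact ⟨z, hs_out z hz⟩
  -- measurability
  have hmeas : Measurable s := by
    have : s = Gp.piecewise (fun x => (U ^ (mInt T U x)) x) id :=
      rfl
    rw [this]
    exact Measurable.piecewise hGm (measurable_zpow_mInt T U U) measurable_id
  have hemb : MeasurableEmbedding s := hmeas.measurableEmbedding hinj
  set e : X ≃ X := Equiv.ofBijective s ⟨hinj, hsurj⟩ with hedef
  have he_coe : ∀ x, e x = s x := fun x => rfl
  have hsymm_meas : Measurable (e.symm : X → X) := by
    intro A hA
    have himg : (e.symm : X → X) ⁻¹' A = s '' A := by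
      ext y
      simp only [Set.mem_preimage, Set.mem_image]
      constructor
      · intro h
        exact ⟨e.symm y, h, by rw [← he_coe, Equiv.apply_symm_apply]⟩
      · rintro ⟨a, ha, rfl⟩
        rw [← he_coe, Equiv.symm_apply_apply]
        exact ha
    rw [himg]
    exact hemb.measurableSet_image' hA
  set Sm : X ≃ᵐ X := { toEquiv := e, measurable_toFun := hmeas, measurable_invFun := hsymm_meas }
    with hSmdef
  have hSm_coe : ∀ x, Sm x = s x := fun x => rfl
  refine ⟨Sm, ⟨?_, ?_⟩, ?_, ?_⟩
  · -- μ.map Sm ≪ μ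
    refine Measure.AbsolutelyContinuous.mk fun A hA h0 => ?_
    rw [Measure.map_apply Sm.measurable hA]
    have hsub : (⇑Sm) ⁻¹' A ⊆ A ∪ ⋃ k : ℤ, (⇑(U ^ k)) ⁻¹' A := by
      intro x hx
      rw [Set.mem_preimage, hSm_coe] at hx
      by_cases hxG : x ∈ Gp
      · rw [hs_in x hxG] at hx
        exact Or.inr (Set.mem_iUnion.2 ⟨m x, hx⟩)
      · rw [hs_out x hxG] at hx
        exact Or.inl hx
    refine measure_mono_null hsub ?_
    rw [measure_union_null_iff]
    exact ⟨h0, measure_iUnion_null fun k => (hq k).preimage_null h0⟩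
  · -- μ ≪ μ.map Sm
    refine Measure.AbsolutelyContinuous.mk fun A hA h0 => ?_
    rw [Measure.map_apply Sm.measurable hA] at h0
    have hAeq : A = s '' ((⇑Sm) ⁻¹' A) := by
      have : (⇑Sm) ⁻¹' A = s ⁻¹' A := rfl
      rw [this, Set.image_preimage_eq A hsurj]
    have hsub : s '' ((⇑Sm) ⁻¹' A) ⊆ ((⇑Sm) ⁻¹' A) ∪
        ⋃ k : ℤ, (⇑(U ^ k)) ⁻¹' ((⇑Sm) ⁻¹' A) := by
      rintro y ⟨x, hx, rfl⟩
      by_cases hxG : x ∈ Gp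
      · rw [hs_in x hxG]
        right
        rw [Set.mem_iUnion]
        refine ⟨-(m x), ?_⟩
        rw [Set.mem_preimage]
        have : (U ^ (-(m x))) ((U ^ (m x)) x) = x := by
          rw [← zpowAddApply]
          simp
        rw [this]
        exact hx
      · rw [hs_out x hxG]
        exact Or.inl hx
    rw [hAeq]
    refine measure_mono_null hsub ?_
    rw [measure_union_null_iff]
    exact ⟨h0, measure_iUnion_null fun k => (hq k).preimage_null h0⟩
  · -- full group
    intro x
    by_cases hx : x ∈ Gp
    · refine ⟨theta T U x (m x), ?_⟩
      rw [hSm_coe, hs_in x hx]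
      exact (hGgood x hx).theta_spec (m x)
    · exact ⟨0, by rw [hSm_coe, hs_out x hx]; simp⟩
  · intro x hx
    rw [hSm_coe, hSm_coe]
    exact key x hx

end CoreConstruction


section Aperiodicity

variable {X : Type*} [MeasurableSpace X] [StandardBorelSpace X]

/-- Iterated minimum of `f` along the forward orbit. -/
noncomputable def minUpTo (f : X → ℝ) (T : X ≃ᵐ X) : ℕ → X → ℝ
  | 0 => f
  | (k + 1) => fun x => min (minUpTo f T k x) (f ((T ^ ((k + 1 : ℕ) : ℤ)) x))

lemma measurable_minUpTo {f : X → ℝ} (hf : Measurable f) (T : X ≃ᵐ X) (k : ℕ) :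
    Measurable (minUpTo f T k) := by
  induction k with
  | zero => exact hf
  | succ k ih => exact Measurable.min ih (hf.comp (T ^ ((k + 1 : ℕ) : ℤ)).measurable)

lemma minUpTo_exists (f : X → ℝ) (T : X ≃ᵐ X) (k : ℕ) (x : X) :
    ∃ i : ℕ, i ≤ k ∧ minUpTo f T k x = f ((T ^ (i : ℤ)) x) := by
  induction k with
  | zero =>
      refine ⟨0, le_rfl, ?_⟩
      show f x = f ((T ^ (0 : ℤ)) x)
      simp
  | succ k ih =>
      obtain ⟨i, hi, hieq⟩ := ih
      rcases le_total (minUpTo f T k x) (f ((T ^ ((k + 1 : ℕ) : ℤ)) x)) with h | h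
      · refine ⟨i, by omega, ?_⟩
        show min _ _ = _
        rw [min_eq_left h, hieq]
      · refine ⟨k + 1, le_rfl, ?_⟩
        show min _ _ = _
        rw [min_eq_right h]

lemma minUpTo_le (f : X → ℝ) (T : X ≃ᵐ X) (k : ℕ) (x : X) :
    ∀ i : ℕ, i ≤ k → minUpTo f T k x ≤ f ((T ^ (i : ℤ)) x) := by
  induction k with
  | zero =>
      intro i hi
      have : i = 0 := by omega
      subst this
      show f x ≤ f ((T ^ (0 : ℤ)) x)
      simp
  | succ k ih =>
      intro i hi
      by_cases hik : i ≤ k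
      · exact le_trans (min_le_left _ _) (ih i hik)
      · have : i = k + 1 := by omega
        subst this
        exact min_le_right _ _

lemma zpow_mod_reduce (T : X ≃ᵐ X) (x : X) {n : ℕ} (hfix : (T ^ (n : ℤ)) x = x) (i : ℕ) :
    (T ^ (i : ℤ)) x = (T ^ ((i % n : ℕ) : ℤ)) x := by
  have hdm : ((n : ℤ)) * ((i / n : ℕ) : ℤ) + ((i % n : ℕ) : ℤ) = (i : ℤ) := by
    exact_mod_cast Nat.div_add_mod i n
  have hmul := zpow_fix_mul T x hfix ((i / n : ℕ) : ℤ)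
  calc (T ^ (i : ℤ)) x
      = (T ^ (((i % n : ℕ) : ℤ) + (n : ℤ) * ((i / n : ℕ) : ℤ))) x := by
        rw [show ((i % n : ℕ) : ℤ) + (n : ℤ) * ((i / n : ℕ) : ℤ) = (i : ℤ) by omega]
    _ = (T ^ ((i % n : ℕ) : ℤ)) ((T ^ ((n : ℤ) * ((i / n : ℕ) : ℤ))) x) := zpowAddApply ..
    _ = (T ^ ((i % n : ℕ) : ℤ)) x := by rw [hmul]

/-- An ergodic element of `MCP μ` over an atomless probability space is a.e. aperiodic. -/
lemma ae_free (μ : Measure X) [IsProbabilityMeasure μ] [NullSingletonClass μ] (T : MCP μ)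
    (hT : PreErgodic (⇑(T : X ≃ᵐ X)) μ) :
    ∀ᵐ x ∂μ, ∀ j : ℤ, j ≠ 0 → ((T : X ≃ᵐ X) ^ j) x ≠ x := by
  classical
  set T' : X ≃ᵐ X := (T : X ≃ᵐ X) with hT'def
  -- main claim: for each `n ≥ 1` the set of `n`-periodic points is null
  have main : ∀ n : ℕ, 1 ≤ n → μ {x | (T' ^ (n : ℤ)) x = x} = 0 := by
    intro n hn
    set A : Set X := {x | (T' ^ (n : ℤ)) x = x} with hAdef
    have hAmeas : MeasurableSet A :=
      measurableSet_eqSet (T' ^ (n : ℤ)).measurable measurable_id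
    have hAinv : ⇑T' ⁻¹' A = A := by
      ext x
      simp only [Set.mem_preimage, hAdef, Set.mem_setOf_eq]
      have e : (T' ^ (n : ℤ)) (T' x) = T' ((T' ^ (n : ℤ)) x) := by
        have h1 := zpowAddApply T' (n : ℤ) 1 x
        have h2 := zpowAddApply T' 1 (n : ℤ) x
        rw [zpow_one] at h1 h2
        rw [← h1, show ((n : ℤ) + 1) = 1 + (n : ℤ) by ring, h2]
      constructor
      · intro h
        rw [e] at h
        exact T'.injective h
      · intro h
        rw [e, h]
    have hmemiff : ∀ x, T' x ∈ A ↔ x ∈ A := by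
      intro x
      rw [← Set.mem_preimage, hAinv]
    rcases hT.prob_eq_zero_or_one hAmeas hAinv with h0 | h1
    · exact h0
    · exfalso
      obtain ⟨f, hf⟩ := exists_measurableEmbedding_real X
      set g : X → ℝ := fun x => if x ∈ A then minUpTo f T' (n - 1) x else 0 with hgdef
      have hgmeas : Measurable g := by
        have : g = A.piecewise (minUpTo f T' (n - 1)) (fun _ => 0) := rfl
        rw [this]
        exact Measurable.piecewise hAmeas (measurable_minUpTo hf.measurable T' (n - 1))
          measurable_const
      have hfix : ∀ x ∈ A, (T' ^ (n : ℤ)) x = x := fun x hx => hx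
      -- invariance of g
      have hgT : ∀ x, g (T' x) = g x := by
        intro x
        by_cases hx : x ∈ A
        · have hTx : T' x ∈ A := (hmemiff x).2 hx
          rw [hgdef]
          simp only
          rw [if_pos hTx, if_pos hx]
          apply le_antisymm
          · obtain ⟨i, hi, hieq⟩ := minUpTo_exists f T' (n - 1) x
            rw [hieq]
            by_cases hi0 : i = 0
            · subst hi0
              have e1 : (T' ^ ((0 : ℕ) : ℤ)) x = (T' ^ ((n : ℕ) : ℤ)) x := by
                rw [hfix x hx]
                simp
              have e2 : (T' ^ ((n - 1 : ℕ) : ℤ)) (T' x) = (T' ^ ((n : ℕ) : ℤ)) x := by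
                have h := zpowAddApply T' ((n - 1 : ℕ) : ℤ) 1 x
                rw [zpow_one] at h
                rw [show ((n - 1 : ℕ) : ℤ) + 1 = ((n : ℕ) : ℤ) by push_cast; omega] at h
                exact h.symm
              rw [e1, ← e2]
              apply minUpTo_le
              omega
            · have e : (T' ^ ((i - 1 : ℕ) : ℤ)) (T' x) = (T' ^ (i : ℤ)) x := by
                have h := zpowAddApply T' ((i - 1 : ℕ) : ℤ) 1 x
                rw [zpow_one] at h
                rw [show ((i - 1 : ℕ) : ℤ) + 1 = (i : ℤ) by push_cast; omega] at h
                exact h.symm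
              rw [← e]
              apply minUpTo_le
              omega
          · obtain ⟨i, hi, hieq⟩ := minUpTo_exists f T' (n - 1) (T' x)
            rw [hieq]
            have e : (T' ^ (i : ℤ)) (T' x) = (T' ^ ((i + 1 : ℕ) : ℤ)) x := by
              have h := zpowAddApply T' (i : ℤ) 1 x
              rw [zpow_one] at h
              rw [show ((i + 1 : ℕ) : ℤ) = (i : ℤ) + 1 by push_cast; ring, h]
            rw [e, zpow_mod_reduce T' x (hfix x hx) (i + 1)]
            apply minUpTo_le
            have := Nat.mod_lt (i + 1) (show 0 < n by omega)
            omega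
        · have hTx : T' x ∉ A := fun hc => hx ((hmemiff x).1 hc)
          rw [hgdef]
          simp only
          rw [if_neg hTx, if_neg hx]
      -- level sets are invariant, hence null or conull
      have hlevel : ∀ t : ℚ, μ {y | g y ≤ (t : ℝ)} = 0 ∨ μ {y | g y ≤ (t : ℝ)} = 1 := by
        intro t
        have hmeas : MeasurableSet {y | g y ≤ (t : ℝ)} :=
          measurableSet_le hgmeas measurable_const
        have hinv : ⇑T' ⁻¹' {y | g y ≤ (t : ℝ)} = {y | g y ≤ (t : ℝ)} := by
          ext x
          simp only [Set.mem_preimage, Set.mem_setOf_eq, hgT x]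
        exact hT.prob_eq_zero_or_one hmeas hinv
      -- almost every point has consistent rational comparisons
      have hae : ∀ᵐ x ∂μ, ∀ t : ℚ,
          (μ {y | g y ≤ (t : ℝ)} = 1 → g x ≤ (t : ℝ)) ∧
          (μ {y | g y ≤ (t : ℝ)} = 0 → ¬ g x ≤ (t : ℝ)) := by
        rw [ae_all_iff]
        intro t
        rcases hlevel t with h0 | h1
        · have : ∀ᵐ x ∂μ, ¬ g x ≤ (t : ℝ) := by
            rw [MeasureTheory.ae_iff]
            simpa using h0
          filter_upwards [this] with x hx
          refine ⟨fun hc => ?_, fun _ => hx⟩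
          exact absurd (h0.symm.trans hc) zero_ne_one
        · have hc0 : μ {y | g y ≤ (t : ℝ)}ᶜ = 0 := by
            have := measure_compl (s := {y | g y ≤ (t : ℝ)})
              (measurableSet_le hgmeas measurable_const) (measure_ne_top μ _)
            rw [h1, measure_univ] at this
            simpa using this
          have : ∀ᵐ x ∂μ, g x ≤ (t : ℝ) := by
            rw [MeasureTheory.ae_iff]
            simpa [Set.compl_def] using hc0
          filter_upwards [this] with x hx
          refine ⟨fun _ => hx, fun hc => ?_⟩
          exact absurd (h1.symm.trans hc) one_ne_zero
      -- conclude: g is a.e. constant, forcing a.e. point into finitely many points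
      have hAae : ∀ᵐ x ∂μ, x ∈ A := by
        rw [MeasureTheory.ae_iff]
        have := measure_compl hAmeas (measure_ne_top μ _)
        rw [h1, measure_univ] at this
        simpa [Set.compl_def] using this
      have hgood : μ ({x | ∀ t : ℚ,
          (μ {y | g y ≤ (t : ℝ)} = 1 → g x ≤ (t : ℝ)) ∧
          (μ {y | g y ≤ (t : ℝ)} = 0 → ¬ g x ≤ (t : ℝ))} ∩ A) ≠ 0 := by
        have h1' : ∀ᵐ x ∂μ, x ∈ {x | ∀ t : ℚ,
            (μ {y | g y ≤ (t : ℝ)} = 1 → g x ≤ (t : ℝ)) ∧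
            (μ {y | g y ≤ (t : ℝ)} = 0 → ¬ g x ≤ (t : ℝ))} ∩ A := by
          filter_upwards [hae, hAae] with x h1 h2
          exact ⟨h1, h2⟩
        intro hc
        have : μ Set.univ = 0 := by
          have hsub : (Set.univ : Set X) ⊆
              ({x | ∀ t : ℚ, (μ {y | g y ≤ (t : ℝ)} = 1 → g x ≤ (t : ℝ)) ∧
                (μ {y | g y ≤ (t : ℝ)} = 0 → ¬ g x ≤ (t : ℝ))} ∩ A) ∪
              ({x | ∀ t : ℚ, (μ {y | g y ≤ (t : ℝ)} = 1 → g x ≤ (t : ℝ)) ∧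
                (μ {y | g y ≤ (t : ℝ)} = 0 → ¬ g x ≤ (t : ℝ))} ∩ A)ᶜ := by
            intro x _
            by_cases hx : x ∈ ({x | ∀ t : ℚ, (μ {y | g y ≤ (t : ℝ)} = 1 → g x ≤ (t : ℝ)) ∧
                (μ {y | g y ≤ (t : ℝ)} = 0 → ¬ g x ≤ (t : ℝ))} ∩ A)
            · exact Or.inl hx
            · exact Or.inr hx
          have hcompl : μ (({x | ∀ t : ℚ, (μ {y | g y ≤ (t : ℝ)} = 1 → g x ≤ (t : ℝ)) ∧
              (μ {y | g y ≤ (t : ℝ)} = 0 → ¬ g x ≤ (t : ℝ))} ∩ A)ᶜ) = 0 := by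
            rw [Set.compl_def]
            exact MeasureTheory.ae_iff.1 h1'
          refine le_antisymm ?_ (zero_le)
          calc μ Set.univ ≤ μ _ + μ _ := (measure_mono hsub).trans (measure_union_le _ _)
          _ = 0 := by rw [hc, hcompl, add_zero]
        rw [measure_univ] at this
        exact one_ne_zero this
      set Good : Set X := {x | ∀ t : ℚ,
          (μ {y | g y ≤ (t : ℝ)} = 1 → g x ≤ (t : ℝ)) ∧
          (μ {y | g y ≤ (t : ℝ)} = 0 → ¬ g x ≤ (t : ℝ))} ∩ A with hGooddef
      obtain ⟨x₁, hx₁⟩ := nonempty_of_measure_ne_zero hgood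
      -- the value of g is constant on Good
      have hconst : ∀ x ∈ Good, g x = g x₁ := by
        intro x hx
        have hiff : ∀ t : ℚ, g x ≤ (t : ℝ) ↔ g x₁ ≤ (t : ℝ) := by
          intro t
          rcases hlevel t with h0 | hone
          · constructor
            · intro hc; exact absurd hc (hx.1 t |>.2 h0)
            · intro hc; exact absurd hc (hx₁.1 t |>.2 h0)
          · constructor
            · intro _; exact hx₁.1 t |>.1 hone
            · intro _; exact hx.1 t |>.1 hone
        by_contra hne
        rcases lt_or_gt_of_ne hne with hlt | hlt
        · obtain ⟨q, hq1, hq2⟩ := exists_rat_btwn hlt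
          have := (hiff q).1 (le_of_lt hq1)
          linarith
        · obtain ⟨q, hq1, hq2⟩ := exists_rat_btwn hlt
          have := (hiff q).2 (le_of_lt hq1)
          linarith
      -- each point of Good lies on the orbit of a single point
      have hx₁A : x₁ ∈ A := hx₁.2
      obtain ⟨i₁, hi₁, hieq₁⟩ := minUpTo_exists f T' (n - 1) x₁
      set x₀ : X := (T' ^ (i₁ : ℤ)) x₁ with hx₀def
      have hgx₁ : g x₁ = f x₀ := by
        rw [hgdef]
        simp only
        rw [if_pos hx₁A]
        exact hieq₁
      have hGsub : Good ⊆ ⋃ i : ℕ, (⇑(T' ^ (i : ℤ))) ⁻¹' {x₀} := by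
        intro x hx
        obtain ⟨i, hi, hieq⟩ := minUpTo_exists f T' (n - 1) x
        have hgx : g x = f ((T' ^ (i : ℤ)) x) := by
          rw [hgdef]
          simp only
          rw [if_pos hx.2]
          exact hieq
        have : f ((T' ^ (i : ℤ)) x) = f x₀ := by
          rw [← hgx, hconst x hx, hgx₁]
        have heq : (T' ^ (i : ℤ)) x = x₀ := hf.injective this
        exact Set.mem_iUnion.2 ⟨i, heq⟩
      apply hgood
      refine measure_mono_null hGsub ?_
      refine measure_iUnion_null fun i => ?_
      have h0 : μ ({x₀} : Set X) = 0 := measure_singleton x₀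
      exact MCP.preimage_null_zpow T (i : ℤ) h0
  -- assemble
  have hbad : μ (⋃ k : ℕ, {x | (T' ^ ((k + 1 : ℕ) : ℤ)) x = x}) = 0 :=
    measure_iUnion_null fun k => main (k + 1) (by omega)
  rw [MeasureTheory.ae_iff]
  refine measure_mono_null (fun x hx => ?_) hbad
  simp only [Set.mem_setOf_eq] at hx
  push_neg at hx
  obtain ⟨j, hj0, hjfix⟩ := hx
  rcases lt_or_gt_of_ne hj0 with hneg | hpos
  · have hfix' : (T' ^ (-j)) x = x := zpow_fix_self T' x hjfix
    refine Set.mem_iUnion.2 ⟨(-j).toNat - 1, ?_⟩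
    have : (((-j).toNat - 1 + 1 : ℕ) : ℤ) = -j := by omega
    rw [Set.mem_setOf_eq, this]
    exact hfix'
  · refine Set.mem_iUnion.2 ⟨j.toNat - 1, ?_⟩
    have : ((j.toNat - 1 + 1 : ℕ) : ℤ) = j := by omega
    rw [Set.mem_setOf_eq, this]
    exact hjfix

lemma preErgodic_symm {μ : Measure X} (T : X ≃ᵐ X) (h : PreErgodic (⇑T) μ) :
    PreErgodic (⇑T.symm) μ := by
  constructor
  intro s hs hinv
  have hTs : ⇑T ⁻¹' s = s := by
    have h1 : ⇑T ⁻¹' (⇑T.symm ⁻¹' s) = s := by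
      ext x
      simp only [Set.mem_preimage, MeasurableEquiv.symm_apply_apply]
    rw [hinv] at h1
    exact h1
  exact h.aeconst_set hs hTs

end Aperiodicity


section FinalGlue

variable {X : Type*} [MeasurableSpace X] [StandardBorelSpace X]

lemma toMod_eq_ae (μ : Measure X) {A B : MCP μ} (h : toMod μ A = toMod μ B) :
    ∀ᵐ x ∂μ, (A : X ≃ᵐ X) x = (B : X ≃ᵐ X) x := by
  have hmem : A⁻¹ * B ∈ AeId μ := QuotientGroup.eq.1 h
  have hmem' : ∀ᵐ x ∂μ, ((A⁻¹ * B : MCP μ) : X ≃ᵐ X) x = x := hmem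
  filter_upwards [hmem'] with x hx
  have hx' : (A : X ≃ᵐ X).symm ((B : X ≃ᵐ X) x) = x := hx
  have h2 := congrArg (A : X ≃ᵐ X) hx'
  rw [MeasurableEquiv.apply_symm_apply] at h2
  exact h2.symm

lemma ae_orbit_avoid {μ : Measure X} (T : MCP μ) {N : Set X} (hN : μ N = 0) :
    ∀ᵐ x ∂μ, ∀ n : ℤ, ((T : X ≃ᵐ X) ^ n) x ∉ N := by
  rw [ae_all_iff]
  intro n
  rw [MeasureTheory.ae_iff]
  refine measure_mono_null (fun x hx => ?_) (MCP.preimage_null_zpow T n hN)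
  simp only [Set.mem_setOf_eq, not_not] at hx
  exact hx

/-- Quotient-level conjugation from a good saturated set. -/
lemma conjugate_of_good (μ : Measure X) (T U : MCP μ) {Gp : Set X}
    (hGm : MeasurableSet Gp) (hGae : ∀ᵐ x ∂μ, x ∈ Gp)
    (hGgood : ∀ x ∈ Gp, GoodPt (T : X ≃ᵐ X) (U : X ≃ᵐ X) x)
    (hGsign : ∀ x ∈ Gp, (symmDiff (Pset (T : X ≃ᵐ X) (U : X ≃ᵐ X) x) NNᶜ).Finite)
    (hGcl : ∀ x ∈ Gp, (T : X ≃ᵐ X) x ∈ Gp ∧ (T : X ≃ᵐ X).symm x ∈ Gp ∧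
      (U : X ≃ᵐ X) x ∈ Gp ∧ (U : X ≃ᵐ X).symm x ∈ Gp) :
    ∃ S : MCP μ, (∀ x : X, ∃ n : ℤ, (S : X ≃ᵐ X) x = ((T : X ≃ᵐ X) ^ n) x) ∧
      toMod μ (S * T * S⁻¹) = toMod μ U := by
  obtain ⟨Sm, ⟨hac1, hac2⟩, hfull, hkey⟩ :=
    core_construction μ (T : X ≃ᵐ X) (U : X ≃ᵐ X) hGm (MCP.qmp_zpow U) hGgood hGsign hGcl
  set S : MCP μ := ⟨Sm, hac1, hac2⟩ with hSdef
  have hS_coe : (S : X ≃ᵐ X) = Sm := rfl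
  refine ⟨S, by rw [hS_coe]; exact hfull, ?_⟩
  change (QuotientGroup.mk (S * T * S⁻¹) : MCP μ ⧸ AeId μ) = QuotientGroup.mk U
  rw [QuotientGroup.eq]
  have hgroup : (S * T * S⁻¹)⁻¹ * U = S * T⁻¹ * S⁻¹ * U := by group
  rw [hgroup]
  show ∀ᵐ x ∂μ, ((S * T⁻¹ * S⁻¹ * U : MCP μ) : X ≃ᵐ X) x = x
  have h0 : μ Gpᶜ = 0 := by
    rw [Set.compl_def]
    exact MeasureTheory.ae_iff.1 hGae
  have hz : ∀ᵐ x ∂μ, ((T⁻¹ * S⁻¹ * U : MCP μ) : X ≃ᵐ X) x ∈ Gp := by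
    rw [MeasureTheory.ae_iff]
    exact measure_mono_null (fun x hx => hx)
      ((MCP.qmp μ (T⁻¹ * S⁻¹ * U)).preimage_null h0)
  filter_upwards [hz] with x hx
  set z : X := ((T⁻¹ * S⁻¹ * U : MCP μ) : X ≃ᵐ X) x with hzdef
  have hzeq : z = (T : X ≃ᵐ X).symm ((S : X ≃ᵐ X).symm ((U : X ≃ᵐ X) x)) := rfl
  have hk := hkey z hx
  have h2 : (T : X ≃ᵐ X) z = (S : X ≃ᵐ X).symm ((U : X ≃ᵐ X) x) := by
    rw [hzeq]
    exact (T : X ≃ᵐ X).apply_symm_apply _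
  rw [h2] at hk
  have h3 : Sm ((S : X ≃ᵐ X).symm ((U : X ≃ᵐ X) x)) = (U : X ≃ᵐ X) x := by
    rw [← hS_coe]
    exact (S : X ≃ᵐ X).apply_symm_apply _
  rw [h3] at hk
  have h4 : Sm z = x := (U : X ≃ᵐ X).injective hk.symm
  exact h4

end FinalGlue

/- ## Statement 7 -/

/-- **Proposition.** Let `T ∈ Aut(X,[μ])` be ergodic and let `U ∈ [T]_com` have the same
orbits as `T` almost everywhere. Then `T` and `U` are flip-conjugate by an element of the
full group `[T]`. -/
theorem flipConj_of_same_orbits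
    {X : Type*} [MeasurableSpace X] [StandardBorelSpace X]
    (μ : Measure X) [IsProbabilityMeasure μ] [NullSingletonClass μ]
    (𝕋 𝕌 : AutMod μ) (h : ErgodicMod μ 𝕋) (hU : 𝕌 ∈ CommFullSet μ 𝕋)
    (horb : ∃ T U : MCP μ, toMod μ T = 𝕋 ∧ toMod μ U = 𝕌 ∧
      ∀ᵐ x ∂μ, orbitZ ((U : X ≃ᵐ X)) x = orbitZ ((T : X ≃ᵐ X)) x) :
    ∃ 𝕊 ∈ FullSet μ 𝕋, 𝕊 * 𝕋 * 𝕊⁻¹ = 𝕌 ∨ 𝕊 * 𝕋⁻¹ * 𝕊⁻¹ = 𝕌 := by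
  classical
  obtain ⟨T, hT𝕋, hTerg⟩ := h
  obtain ⟨T₁, U₁, hT₁, hU₁, hIF, hfwd1⟩ := hU
  obtain ⟨T₂, U₂, hT₂, hU₂, horb2⟩ := horb
  -- almost-everywhere identifications of the representatives
  have hT₁T : ∀ᵐ x ∂μ, (T₁ : X ≃ᵐ X) x = (T : X ≃ᵐ X) x := toMod_eq_ae μ (hT₁.trans hT𝕋.symm)
  have hT₂T : ∀ᵐ x ∂μ, (T₂ : X ≃ᵐ X) x = (T : X ≃ᵐ X) x := toMod_eq_ae μ (hT₂.trans hT𝕋.symm)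
  have hU₁U₂ : ∀ᵐ x ∂μ, (U₁ : X ≃ᵐ X) x = (U₂ : X ≃ᵐ X) x := toMod_eq_ae μ (hU₁.trans hU₂.symm)
  have hpowT₁ := ae_zpow_eq T₁ T hT₁T
  have hpowT₂ := ae_zpow_eq T₂ T hT₂T
  have hfree := ae_free μ T hTerg
  -- the orbit equality holds for the chosen representatives
  have horbTU : ∀ᵐ x ∂μ, orbitZ (U₂ : X ≃ᵐ X) x = orbitZ (T : X ≃ᵐ X) x := by
    filter_upwards [horb2, hpowT₂] with x h1 h2
    rw [h1]
    ext y
    constructor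
    · rintro ⟨n, rfl⟩
      exact ⟨n, (h2 n).symm⟩
    · rintro ⟨n, rfl⟩
      exact ⟨n, h2 n⟩
  -- the commensuration condition holds for the chosen representatives
  have hNU : μ {y | (U₁ : X ≃ᵐ X) y ≠ (U₂ : X ≃ᵐ X) y} = 0 := by
    rw [← MeasureTheory.ae_iff]
    exact hU₁U₂
  have havoid := ae_orbit_avoid T hNU
  have hfwd : ∀ᵐ x ∂μ, (symmDiff (fwdSet (T : X ≃ᵐ X) (U₂ : X ≃ᵐ X) x) NN).Finite := by
    filter_upwards [hfwd1, hpowT₁, havoid] with x h1 h2 h3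
    have hUeq : ∀ n : ℤ, (U₁ : X ≃ᵐ X) (((T : X ≃ᵐ X) ^ n) x)
        = (U₂ : X ≃ᵐ X) (((T : X ≃ᵐ X) ^ n) x) := by
      intro n
      have := h3 n
      simp only [Set.mem_setOf_eq, not_not] at this
      exact this
    have he : fwdSet (T₁ : X ≃ᵐ X) (U₁ : X ≃ᵐ X) x
        = fwdSet (T : X ≃ᵐ X) (U₂ : X ≃ᵐ X) x := by
      ext m
      simp only [fwdSet, permImage, Set.mem_setOf_eq]
      constructor
      · rintro ⟨n, hn, heq⟩
        rw [h2 n, h2 m, hUeq n] at heq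
        exact ⟨n, hn, heq⟩
      · rintro ⟨n, hn, heq⟩
        rw [← hUeq n, ← h2 n, ← h2 m] at heq
        exact ⟨n, hn, heq⟩
    rw [← he]
    exact h1
  -- almost every point is good for (T, U₂)
  have hgood_ae : ∀ᵐ x ∂μ, GoodPt (T : X ≃ᵐ X) (U₂ : X ≃ᵐ X) x := by
    filter_upwards [hfree, horbTU] with x h1 h2
    refine ⟨h1, fun n => ?_, fun j => ?_⟩
    · have hmem : ((U₂ : X ≃ᵐ X) ^ n) x ∈ orbitZ (U₂ : X ≃ᵐ X) x := ⟨n, rfl⟩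
      rw [h2] at hmem
      obtain ⟨j, hj⟩ := hmem
      exact ⟨j, hj.symm⟩
    · have hmem : ((T : X ≃ᵐ X) ^ j) x ∈ orbitZ (T : X ≃ᵐ X) x := ⟨j, rfl⟩
      rw [← h2] at hmem
      exact hmem
  -- saturated good set and the invariant sign set
  obtain ⟨G₁, hG₁meas, hG₁ae, hG₁sub, hG₁cl⟩ :=
    saturate T U₂ (measurableSet_goodPt (T : X ≃ᵐ X) (U₂ : X ≃ᵐ X)) hgood_ae
  set E : Set X := {x | (symmDiff (Pset (T : X ≃ᵐ X) (U₂ : X ≃ᵐ X) x) NNᶜ).Finite} with hEdef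
  have hEmeas : MeasurableSet E := measurableSet_signPlus (T : X ≃ᵐ X) (U₂ : X ≃ᵐ X)
  have hE₁inv : ⇑(T : X ≃ᵐ X) ⁻¹' (E ∩ G₁) = E ∩ G₁ := by
    ext x
    simp only [Set.mem_preimage, Set.mem_inter_iff]
    constructor
    · rintro ⟨h1, h2⟩
      have hx : x ∈ G₁ := by
        have h3 := (hG₁cl _ h2).2.1
        rwa [MeasurableEquiv.symm_apply_apply] at h3
      refine ⟨?_, hx⟩
      have hgx := hG₁sub hx
      have hgTx := hG₁sub h2
      obtain ⟨a, ha⟩ := hgx.2.2 1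
      rw [zpow_one] at ha
      exact (hgx.signPlus_step hgTx ha).1 h1
    · rintro ⟨h1, h2⟩
      have hTx : (T : X ≃ᵐ X) x ∈ G₁ := (hG₁cl x h2).1
      refine ⟨?_, hTx⟩
      have hgx := hG₁sub h2
      have hgTx := hG₁sub hTx
      obtain ⟨a, ha⟩ := hgx.2.2 1
      rw [zpow_one] at ha
      exact (hgx.signPlus_step hgTx ha).2 h1
  rcases hTerg.prob_eq_zero_or_one (hEmeas.inter hG₁meas) hE₁inv with hE0 | hE1
  · -- sign −1 : conjugate T⁻¹ to U₂
    have hcompl_ae : ∀ᵐ x ∂μ, x ∉ E ∩ G₁ := by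
      rw [MeasureTheory.ae_iff]
      exact measure_mono_null (fun x hx => by simpa using hx) hE0
    have hgoodminus : ∀ᵐ x ∂μ, GoodPt ((T⁻¹ : MCP μ) : X ≃ᵐ X) ((U₂ : MCP μ) : X ≃ᵐ X) x ∧
        (symmDiff (Pset ((T⁻¹ : MCP μ) : X ≃ᵐ X) ((U₂ : MCP μ) : X ≃ᵐ X) x) NNᶜ).Finite := by
      filter_upwards [hG₁ae, hcompl_ae, hfwd] with x hx1 hx2 hx3
      have hgx := hG₁sub hx1
      have hnotE : x ∉ E := fun hc => hx2 ⟨hc, hx1⟩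
      have hminus : (symmDiff (Pset (T : X ≃ᵐ X) (U₂ : X ≃ᵐ X) x) NN).Finite := by
        rcases hgx.dichotomy hx3 with hplus | hminus
        · exact absurd hplus hnotE
        · exact hminus
      rw [MCP.coe_inv]
      exact ⟨hgx.inv, hgx.signMinus_inv hminus⟩
    have hCm : MeasurableSet {x | GoodPt ((T⁻¹ : MCP μ) : X ≃ᵐ X) ((U₂ : MCP μ) : X ≃ᵐ X) x ∧
        (symmDiff (Pset ((T⁻¹ : MCP μ) : X ≃ᵐ X) ((U₂ : MCP μ) : X ≃ᵐ X) x) NNᶜ).Finite} := by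
      have e : {x | GoodPt ((T⁻¹ : MCP μ) : X ≃ᵐ X) ((U₂ : MCP μ) : X ≃ᵐ X) x ∧
          (symmDiff (Pset ((T⁻¹ : MCP μ) : X ≃ᵐ X) ((U₂ : MCP μ) : X ≃ᵐ X) x) NNᶜ).Finite}
          = {x | GoodPt ((T⁻¹ : MCP μ) : X ≃ᵐ X) ((U₂ : MCP μ) : X ≃ᵐ X) x} ∩
            {x | (symmDiff (Pset ((T⁻¹ : MCP μ) : X ≃ᵐ X) ((U₂ : MCP μ) : X ≃ᵐ X) x) NNᶜ).Finite} := rfl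
      rw [e]
      exact (measurableSet_goodPt _ _).inter (measurableSet_signPlus _ _)
    obtain ⟨Gp, hGpmeas, hGpae, hGpsub, hGpcl⟩ := saturate (T⁻¹) U₂ hCm hgoodminus
    obtain ⟨S, hSfull, hSconj⟩ := conjugate_of_good μ (T⁻¹) U₂ hGpmeas hGpae
      (fun x hx => (hGpsub hx).1) (fun x hx => (hGpsub hx).2) hGpcl
    refine ⟨toMod μ S, ⟨T, S, hT𝕋, rfl, ?_⟩, Or.inr ?_⟩
    · refine Filter.Eventually.of_forall fun x => ?_
      obtain ⟨n, hn⟩ := hSfull x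
      rw [MCP.coe_inv, invZpowApply] at hn
      exact ⟨-n, hn⟩
    · rw [← hT𝕋, ← hU₂]
      have e1 : toMod μ S * (toMod μ T)⁻¹ * (toMod μ S)⁻¹ = toMod μ (S * T⁻¹ * S⁻¹) := rfl
      rw [e1]
      exact hSconj
  · -- sign +1 : conjugate T to U₂
    have hplus_ae : ∀ᵐ x ∂μ, x ∈ E ∩ G₁ := by
      rw [MeasureTheory.ae_iff]
      have := measure_compl (s := E ∩ G₁) (hEmeas.inter hG₁meas) (measure_ne_top μ _)
      rw [hE1, measure_univ] at this
      simpa [Set.compl_def] using this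
    have hgoodplus : ∀ᵐ x ∂μ, GoodPt ((T : MCP μ) : X ≃ᵐ X) ((U₂ : MCP μ) : X ≃ᵐ X) x ∧
        (symmDiff (Pset ((T : MCP μ) : X ≃ᵐ X) ((U₂ : MCP μ) : X ≃ᵐ X) x) NNᶜ).Finite := by
      filter_upwards [hplus_ae] with x hx
      exact ⟨hG₁sub hx.2, hx.1⟩
    have hCm : MeasurableSet {x | GoodPt ((T : MCP μ) : X ≃ᵐ X) ((U₂ : MCP μ) : X ≃ᵐ X) x ∧
        (symmDiff (Pset ((T : MCP μ) : X ≃ᵐ X) ((U₂ : MCP μ) : X ≃ᵐ X) x) NNᶜ).Finite} := by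
      have e : {x | GoodPt ((T : MCP μ) : X ≃ᵐ X) ((U₂ : MCP μ) : X ≃ᵐ X) x ∧
          (symmDiff (Pset ((T : MCP μ) : X ≃ᵐ X) ((U₂ : MCP μ) : X ≃ᵐ X) x) NNᶜ).Finite}
          = {x | GoodPt ((T : MCP μ) : X ≃ᵐ X) ((U₂ : MCP μ) : X ≃ᵐ X) x} ∩
            {x | (symmDiff (Pset ((T : MCP μ) : X ≃ᵐ X) ((U₂ : MCP μ) : X ≃ᵐ X) x) NNᶜ).Finite} := rfl
      rw [e]
      exact (measurableSet_goodPt _ _).inter (measurableSet_signPlus _ _)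
    obtain ⟨Gp, hGpmeas, hGpae, hGpsub, hGpcl⟩ := saturate T U₂ hCm hgoodplus
    obtain ⟨S, hSfull, hSconj⟩ := conjugate_of_good μ T U₂ hGpmeas hGpae
      (fun x hx => (hGpsub hx).1) (fun x hx => (hGpsub hx).2) hGpcl
    refine ⟨toMod μ S, ⟨T, S, hT𝕋, rfl, ?_⟩, Or.inl ?_⟩
    · exact Filter.Eventually.of_forall hSfull
    · rw [← hT𝕋, ← hU₂]
      have e1 : toMod μ S * toMod μ T * (toMod μ S)⁻¹ = toMod μ (S * T * S⁻¹) := rfl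
      rw [e1]
      exact hSconj


end CfgPaper
end

section
/- Let (σₙ) be a sequence in Sym(ℤ,ℕ). Then σₙ → id in Sym(ℤ,ℕ) if and only if σₙ → id pointwise on ℤ (i.e. in Sym(ℤ) with the topology of pointwise convergence) and σₙ(ℕ) = ℕ for all sufficiently large n. -/
/- # Preliminaries: the commensurating group `Sym(ℤ,ℕ)` and its Polish topology. -/

open Filter Set

namespace CfgPaper

/-- The commensurating group of `ℤ`: permutations `σ` of `ℤ` with `σ(ℕ) ∆ ℕ` finite. -/
def SymZN : Subgroup (Equiv.Perm ℤ) where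
  carrier := {σ | (symmDiff (⇑σ '' NN) NN).Finite}
  one_mem' := by
    simp only [Set.mem_setOf_eq, Equiv.Perm.coe_one, Set.image_id, symmDiff_self]
    exact Set.finite_empty
  mul_mem' := by
    intro a b ha hb
    simp only [Set.mem_setOf_eq] at *
    have himage : ⇑(a * b) '' NN = ⇑a '' (⇑b '' NN) := by
      rw [Equiv.Perm.coe_mul, Set.image_comp]
    rw [himage]
    have htri : symmDiff (⇑a '' (⇑b '' NN)) NN ⊆
        symmDiff (⇑a '' (⇑b '' NN)) (⇑a '' NN) ∪ symmDiff (⇑a '' NN) NN :=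
      symmDiff_triangle _ _ _
    have heq : symmDiff (⇑a '' (⇑b '' NN)) (⇑a '' NN) = ⇑a '' symmDiff (⇑b '' NN) NN :=
      (Set.image_symmDiff a.injective _ _).symm
    refine Set.Finite.subset (Set.Finite.union ?_ ha) htri
    rw [heq]
    exact hb.image _
  inv_mem' := by
    intro a ha
    simp only [Set.mem_setOf_eq] at *
    have hinj : Set.InjOn ⇑a (symmDiff (⇑a⁻¹ '' NN) NN) := a.injective.injOn
    refine Set.Finite.of_finite_image ?_ hinj
    have himg : ⇑a '' symmDiff (⇑a⁻¹ '' NN) NN = symmDiff (⇑a '' (⇑a⁻¹ '' NN)) (⇑a '' NN) :=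
      Set.image_symmDiff a.injective _ _
    have hroundtrip : ⇑a '' (⇑a⁻¹ '' NN) = NN := by
      rw [Set.image_image]
      simp only [Equiv.Perm.coe_inv, Equiv.apply_symm_apply, Set.image_id']
    rw [himg, hroundtrip, symmDiff_comm]
    exact ha

lemma mem_SymZN {σ : Equiv.Perm ℤ} : σ ∈ SymZN ↔ (symmDiff (⇑σ '' NN) NN).Finite := Iff.rfl

/-- The countable set `Comm(ℕ)` of subsets of `ℤ` commensurated to `ℕ`. -/
def CommNT : Type := {A : Set ℤ // (symmDiff A NN).Finite}

lemma image_commensurated {σ : Equiv.Perm ℤ} (hσ : σ ∈ SymZN) {A : Set ℤ}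
    (hA : (symmDiff A NN).Finite) : (symmDiff (⇑σ '' A) NN).Finite := by
  have htri : symmDiff (⇑σ '' A) NN ⊆
      symmDiff (⇑σ '' A) (⇑σ '' NN) ∪ symmDiff (⇑σ '' NN) NN := symmDiff_triangle _ _ _
  have heq : symmDiff (⇑σ '' A) (⇑σ '' NN) = ⇑σ '' symmDiff A NN :=
    (Set.image_symmDiff σ.injective _ _).symm
  refine Set.Finite.subset (Set.Finite.union ?_ hσ) htri
  rw [heq]
  exact hA.image _

/-- The faithful action of `Sym(ℤ,ℕ)` on `Comm(ℕ)` by permutations. -/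
def symZNPerm (σ : SymZN) : Equiv.Perm CommNT where
  toFun A := ⟨⇑(σ : Equiv.Perm ℤ) '' A.1, image_commensurated σ.2 A.2⟩
  invFun A := ⟨⇑((σ : Equiv.Perm ℤ)⁻¹) '' A.1, image_commensurated (σ⁻¹ : SymZN).2 A.2⟩
  left_inv A := by
    apply Subtype.ext
    show ⇑((σ : Equiv.Perm ℤ)⁻¹) '' (⇑(σ : Equiv.Perm ℤ) '' A.1) = A.1
    rw [Set.image_image]
    simp only [Equiv.Perm.coe_inv, Equiv.symm_apply_apply, Set.image_id']
  right_inv A := by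
    apply Subtype.ext
    show ⇑(σ : Equiv.Perm ℤ) '' (⇑((σ : Equiv.Perm ℤ)⁻¹) '' A.1) = A.1
    rw [Set.image_image]
    simp only [Equiv.Perm.coe_inv, Equiv.apply_symm_apply, Set.image_id']

/-- The discrete topology on `Comm(ℕ)`. -/
def commNTTop : TopologicalSpace CommNT := ⊥

/-- The topology of pointwise convergence on the permutation group of the countable
set `Comm(ℕ)` (together with pointwise convergence of inverses). -/
def permCommTop : TopologicalSpace (Equiv.Perm CommNT) :=
  TopologicalSpace.induced (fun π => (⇑π, ⇑π.symm))
    (@instTopologicalSpaceProd _ _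
      (@Pi.topologicalSpace _ _ (fun _ => commNTTop))
      (@Pi.topologicalSpace _ _ (fun _ => commNTTop)))

/-- The Polish group topology on `Sym(ℤ,ℕ)`: the one induced by its faithful action
on `Comm(ℕ)`. -/
def symZNTop : TopologicalSpace SymZN :=
  TopologicalSpace.induced symZNPerm permCommTop

lemma tendsto_one_iff_forall (σ : ℕ → SymZN) :
    Tendsto σ atTop (@nhds _ symZNTop 1) ↔
      ∀ A : CommNT, ∀ᶠ n in atTop, ⇑(σ n : Equiv.Perm ℤ) '' A.1 = A.1 := by
  letI : TopologicalSpace CommNT := commNTTop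
  haveI : DiscreteTopology CommNT := ⟨rfl⟩
  rw [symZNTop, permCommTop, induced_compose, nhds_induced, tendsto_comap_iff]
  have hβ : ((fun π : Equiv.Perm CommNT => (⇑π, ⇑π.symm)) ∘ symZNPerm) 1
      = (⇑(symZNPerm 1), ⇑(symZNPerm 1).symm) := rfl
  rw [hβ, nhds_prod_eq, tendsto_prod_iff']
  simp only [tendsto_pi_nhds, nhds_discrete, tendsto_pure, Function.comp]
  have h1 : ∀ A : CommNT, symZNPerm 1 A = A := by
    intro A; apply Subtype.ext
    show ⇑((1 : SymZN) : Equiv.Perm ℤ) '' A.1 = A.1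
    simp
  have h2 : ∀ A : CommNT, (symZNPerm 1).symm A = A := by
    intro A; rw [Equiv.symm_apply_eq, h1]
  constructor
  · intro ⟨h, _⟩ A
    filter_upwards [h A] with n hn
    rw [h1 A] at hn
    exact congrArg Subtype.val hn
  · intro h
    constructor
    · intro A
      filter_upwards [h A] with n hn
      rw [h1 A]
      exact Subtype.ext hn
    · intro A
      filter_upwards [h A] with n hn
      rw [h2 A, Equiv.symm_apply_eq, eq_comm]
      exact Subtype.ext hn

lemma NN_mem : (symmDiff NN NN).Finite := by
  rw [symmDiff_self]; exact Set.finite_empty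


/- ## Statement 8 -/

/-- **Lemma.** A sequence `(σₙ)` in `Sym(ℤ,ℕ)` converges to the identity if and only if
it converges to the identity pointwise on `ℤ` and `σₙ(ℕ) = ℕ` for all large enough `n`. -/
theorem symZN_tendsto_one_iff (σ : ℕ → SymZN) :
    Tendsto σ atTop (@nhds _ symZNTop 1) ↔
      ((∀ x : ℤ, ∀ᶠ n in atTop, ((σ n : Equiv.Perm ℤ)) x = x) ∧
        ∀ᶠ n in atTop, (⇑(σ n : Equiv.Perm ℤ)) '' NN = NN) := by
  rw [tendsto_one_iff_forall]
  constructor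
  · intro H
    refine ⟨?_, H ⟨NN, NN_mem⟩⟩
    intro x
    rcases le_or_gt 0 x with hx0 | hx0
    · have hAx : (symmDiff (NN \ {x}) NN).Finite := by
        refine Set.Finite.subset (Set.finite_singleton x) ?_
        intro y hy
        simp only [Set.symmDiff_def, Set.mem_union, Set.mem_diff, Set.mem_singleton_iff] at hy ⊢
        tauto
      filter_upwards [H ⟨NN, NN_mem⟩, H ⟨NN \ {x}, hAx⟩] with n h0 hx
      have himg : ⇑(σ n : Equiv.Perm ℤ) '' (NN \ {x}) = NN \ {(σ n : Equiv.Perm ℤ) x} := by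
        rw [Set.image_diff (σ n : Equiv.Perm ℤ).injective, Set.image_singleton, h0]
      rw [himg] at hx
      by_contra hne
      have hmem : x ∈ NN \ {(σ n : Equiv.Perm ℤ) x} :=
        ⟨hx0, by simpa using Ne.symm hne⟩
      rw [hx] at hmem
      exact hmem.2 rfl
    · have hxNN : x ∉ NN := not_le.2 hx0
      have hAx : (symmDiff (insert x NN) NN).Finite := by
        refine Set.Finite.subset (Set.finite_singleton x) ?_
        intro y hy
        simp only [Set.symmDiff_def, Set.mem_union, Set.mem_diff, Set.mem_insert_iff,
          Set.mem_singleton_iff] at hy ⊢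
        tauto
      filter_upwards [H ⟨NN, NN_mem⟩, H ⟨insert x NN, hAx⟩] with n h0 hx
      rw [Set.image_insert_eq, h0] at hx
      have hmem : (σ n : Equiv.Perm ℤ) x ∈ insert x NN := by
        rw [← hx]; exact Set.mem_insert _ _
      rcases hmem with h | h
      · exact h
      · exfalso
        rw [← h0] at h
        obtain ⟨y, hy, hyx⟩ := h
        exact hxNN ((σ n : Equiv.Perm ℤ).injective hyx ▸ hy)
  · rintro ⟨hpt, hNN⟩ A
    have hall : ∀ᶠ n in atTop, ∀ x ∈ symmDiff A.1 NN, (σ n : Equiv.Perm ℤ) x = x :=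
      (Set.Finite.eventually_all A.2).2 fun x _ => hpt x
    filter_upwards [hall, hNN] with n hfix h0
    have hA : symmDiff NN (symmDiff A.1 NN) = A.1 := by
      rw [symmDiff_comm A.1 NN, symmDiff_symmDiff_cancel_left]
    have hDimg : ⇑(σ n : Equiv.Perm ℤ) '' (symmDiff A.1 NN) = symmDiff A.1 NN := by
      ext y
      constructor
      · rintro ⟨z, hz, rfl⟩; rw [hfix z hz]; exact hz
      · intro hy; exact ⟨y, hy, hfix y hy⟩
    calc ⇑(σ n : Equiv.Perm ℤ) '' A.1
        = ⇑(σ n : Equiv.Perm ℤ) '' (symmDiff NN (symmDiff A.1 NN)) := by rw [hA]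
      _ = symmDiff (⇑(σ n : Equiv.Perm ℤ) '' NN)
            (⇑(σ n : Equiv.Perm ℤ) '' (symmDiff A.1 NN)) :=
          Set.image_symmDiff (σ n : Equiv.Perm ℤ).injective _ _
      _ = symmDiff NN (symmDiff A.1 NN) := by rw [h0, hDimg]
      _ = A.1 := hA

end CfgPaper
end
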